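/- arXiv:1008.3135 — 6 statements merged into one kernel-verified Lean document; each statement's English description precedes it below -/
import Mathlib

section
/- Let K, M ≥ 0 be integers with K + M ≥ 1, let k_1, …, k_K be integers with k_j ≥ 1 and m_1, …, m_M be integers with m_j ≥ 4, and assume that at least one k_j ≥ 2 or M ≥ 1. Define the complex polynomial F(t) = Σ_{j=1}^{K} b_{k_j}(t)·Π_{i≠j} a_{k_i}(t)·Π_{r=1}^{M} d_{m_r}(t) + Σ_{j=1}^{M} e_{m_j}(t)·Π_{i=1}^{K} a_{k_i}(t)·Π_{r≠j} d_{m_r}(t). Then every complex root t₀ of F satisfies |t₀| = 1 (i.e., F is unimodular). -/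
open Polynomial

/-- Poincaré polynomial `a_k(t) = 1 + t² + ⋯ + t^{2(k-1)}` of the moduli algebra of `A_k`. -/
noncomputable def polyA (k : ℕ) : Polynomial ℂ :=
  ∑ s ∈ Finset.range k, Polynomial.X ^ (2 * s)

/-- Poincaré polynomial `b_k(t) = 1 + t² + ⋯ + t^{2(k-2)}` of the Lie algebra of derivations
for `A_k` (with `b_1 = 0`). -/
noncomputable def polyB (k : ℕ) : Polynomial ℂ :=
  ∑ s ∈ Finset.range (k - 1), Polynomial.X ^ (2 * s)

/-!
At a root `t` with `‖t‖ ≠ 1` none of the factors `a_k(t)`, `d_m(t)` vanishes, so `F(t) = 0`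
says that `∑ b_k(t)/a_k(t) + ∑ e_m(t)/d_m(t) = 0`. Each quotient has the form
`(1 - w t^p) / (1 - w t^(p+2))` with `w = ±1`, and all of them except `b_1/a_1 = 0` lie in one
open half-plane `{z | 0 < Re (c z)}` depending only on `t`. For real `t` they are positive.
Otherwise `Im (t z) · Im t · (1 - ‖t‖²) > 0`: with `N = p + 1` this quantity is, up to a
positive factor, `(Im t)² ∑_{s<N} ‖t‖^(2s) - w Im t Im (t^N)`, which is positive by
`|Im (t^N)| ≤ N ‖t‖^(N-1) |Im t|` and the AM-GM bound `N x^(N-1) ≤ ∑_{s<N} x^(2s)`.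
-/

open Complex Finset ComplexConjugate

theorem two_mul_sum_pow_sub_eq_sum_sq (x : ℝ) (N : ℕ) :
    2 * (∑ s ∈ range N, x ^ (2 * s) - N * x ^ (N - 1))
      = ∑ s ∈ range N, (x ^ s - x ^ (N - 1 - s)) ^ 2 := by
  have hsq : ∀ s ∈ range N, (x ^ s - x ^ (N - 1 - s)) ^ 2
      = x ^ (2 * s) + x ^ (2 * (N - 1 - s)) - 2 * x ^ (N - 1) := fun s hs => by
    obtain ⟨r, hr⟩ := Nat.exists_eq_add_of_le (Nat.le_sub_one_of_lt (mem_range.1 hs))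
    rw [hr, Nat.add_sub_cancel_left]
    ring
  rw [sum_congr rfl hsq, sum_sub_distrib, sum_add_distrib,
    sum_range_reflect (fun s => x ^ (2 * s)) N]
  simp only [sum_const, card_range, nsmul_eq_mul]
  ring

theorem nat_mul_pow_lt_sum_pow {x : ℝ} (hx0 : 0 ≤ x) (hx : x ≠ 1) {N : ℕ} (hN : 2 ≤ N) :
    N * x ^ (N - 1) < ∑ s ∈ range N, x ^ (2 * s) := by
  have := two_mul_sum_pow_sub_eq_sum_sq x N
  have : 0 < ∑ s ∈ range N, (x ^ s - x ^ (N - 1 - s)) ^ 2 := by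
    refine sum_pos' (fun _ _ => sq_nonneg _) ⟨0, mem_range.2 (by omega), ?_⟩
    rw [pow_zero, Nat.sub_zero, sq_pos_iff, sub_ne_zero, ne_comm, ne_eq,
      pow_eq_one_iff_of_nonneg hx0 (by omega)]
    exact hx
  linarith

theorem abs_im_pow_le (t : ℂ) (N : ℕ) : |(t ^ N).im| ≤ N * ‖t‖ ^ (N - 1) * |t.im| := by
  induction N with
  | zero => simp
  | succ n ih =>
    rw [pow_succ, mul_im, Nat.add_sub_cancel]
    calc |(t ^ n).re * t.im + (t ^ n).im * t.re|
        ≤ |(t ^ n).re| * |t.im| + |(t ^ n).im| * |t.re| := by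
          rw [← abs_mul, ← abs_mul]; exact abs_add_le _ _
      _ ≤ ‖t‖ ^ n * |t.im| + (n * ‖t‖ ^ (n - 1) * |t.im|) * ‖t‖ := by
          gcongr
          · exact (abs_re_le_norm _).trans (norm_pow t n).le
          · exact abs_re_le_norm t
      _ = (n + 1 : ℕ) * ‖t‖ ^ n * |t.im| := by
          rcases n with _ | n
          · simp
          · push_cast; ring

theorem one_sub_mul_pow_ne_zero {t w : ℂ} (ht : ‖t‖ ≠ 1) (hw : ‖w‖ = 1) {n : ℕ}
    (hn : n ≠ 0) : 1 - w * t ^ n ≠ 0 := by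
  rw [sub_ne_zero, ne_comm]
  intro h
  apply ht
  have := congrArg norm h
  rwa [norm_mul, hw, one_mul, norm_pow, norm_one,
    pow_eq_one_iff_of_nonneg (norm_nonneg t) hn] at this

theorem Finset.sum_mul_prod_erase_eq_prod_mul_sum_div {ι K : Type*} [Field K] [DecidableEq ι]
    (s : Finset ι) (f g : ι → K) (hg : ∀ i ∈ s, g i ≠ 0) :
    ∑ j ∈ s, f j * ∏ i ∈ s.erase j, g i = (∏ i ∈ s, g i) * ∑ j ∈ s, f j / g j := by
  rw [mul_sum]
  refine sum_congr rfl fun j hj => ?_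
  rw [← mul_prod_erase s g hj]
  field_simp [hg j hj]

/-- For `w = 1`, `p = 2 (k - 1)` this is `b_k / a_k`; for `w = -1`, `p = m - 4` it is
`e_m / d_m`. -/
noncomputable def powRatio (w : ℝ) (p : ℕ) (t : ℂ) : ℂ :=
  (1 - w * t ^ p) / (1 - w * t ^ (p + 2))

theorem im_mul_one_sub_mul_pow_mul_conj (t : ℂ) {w : ℝ} (hw : |w| = 1) (p : ℕ) :
    (t * (1 - w * t ^ p) * conj (1 - w * t ^ (p + 2))).im
      = t.im * (1 - ‖t‖ ^ (2 * (p + 1))) - w * (1 - ‖t‖ ^ 2) * (t ^ (p + 1)).im := by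
  have hw2 : (w : ℂ) ^ 2 = 1 := by norm_cast; rw [← sq_abs, hw, one_pow]
  have hc := mul_conj' t
  have hcp : t ^ (p + 1) * conj t ^ (p + 1) = (‖t‖ : ℂ) ^ (2 * (p + 1)) := by
    rw [← mul_pow, hc, ← pow_mul]
  have hexpand : t * (1 - w * t ^ p) * conj (1 - w * t ^ (p + 2))
      = t - w * t ^ (p + 1) - ((w * ‖t‖ ^ 2 : ℝ) : ℂ) * conj (t ^ (p + 1))
        + ((‖t‖ ^ (2 * (p + 1)) : ℝ) : ℂ) * conj t := by
    simp only [map_sub, map_one, map_mul, conj_ofReal, map_pow]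
    push_cast
    linear_combination (-(w : ℂ) * conj t ^ (p + 1)) * hc + (conj t) * hcp
      + (t ^ (p + 1) * conj t ^ (p + 2)) * hw2
  rw [hexpand]
  simp only [sub_im, add_im, im_ofReal_mul, conj_im]
  ring

theorem im_mul_powRatio_mul_pos {t : ℂ} (him : t.im ≠ 0) (ht : ‖t‖ ≠ 1) {w : ℝ}
    (hw : |w| = 1) {p : ℕ} (hpw : 1 ≤ p ∨ w = -1) :
    0 < (t * powRatio w p t).im * (t.im * (1 - ‖t‖ ^ 2)) := by
  set den := 1 - (w : ℂ) * t ^ (p + 2)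
  set S := ∑ s ∈ range (p + 1), ‖t‖ ^ (2 * s)
  have hden : 0 < normSq den :=
    normSq_pos.2 (one_sub_mul_pow_ne_zero ht (by simpa using hw) (by omega))
  have hρ : 0 < (1 - ‖t‖ ^ 2) ^ 2 := sq_pos_iff.2 <| sub_ne_zero.2 fun h =>
    ht ((pow_eq_one_iff_of_nonneg (norm_nonneg t) two_ne_zero).1 h.symm)
  have hgeom : 1 - ‖t‖ ^ (2 * (p + 1)) = (1 - ‖t‖ ^ 2) * S := by
    simp_rw [S, pow_mul]; exact (mul_neg_geom_sum _ _).symm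
  have hbound : w * (t.im * (t ^ (p + 1)).im) < t.im ^ 2 * S := by
    rcases Nat.eq_zero_or_pos p with rfl | hp
    · simp only [S, hpw.resolve_left (by omega), zero_add, pow_one, range_one, sum_singleton,
        mul_zero, pow_zero, mul_one]
      nlinarith [sq_pos_iff.2 him]
    calc w * (t.im * (t ^ (p + 1)).im) ≤ |t.im| * |(t ^ (p + 1)).im| := by
          rw [← abs_mul, ← one_mul |_|, ← hw, ← abs_mul]; exact le_abs_self _
      _ ≤ |t.im| * ((p + 1 : ℕ) * ‖t‖ ^ p * |t.im|) := by
          gcongr; exact abs_im_pow_le t (p + 1)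
      _ = t.im ^ 2 * ((p + 1 : ℕ) * ‖t‖ ^ (p + 1 - 1)) := by
          rw [Nat.add_sub_cancel, ← sq_abs t.im]; ring
      _ < t.im ^ 2 * S := by
          gcongr
          exact nat_mul_pow_lt_sum_pow (norm_nonneg t) ht (by omega)
  have hnormSq :
      (t * powRatio w p t).im * normSq den = (t * (1 - w * t ^ p) * conj den).im := by
    rw [powRatio, ← mul_div_assoc, div_eq_mul_inv, Complex.inv_def, ← mul_assoc, im_mul_ofReal,
      inv_mul_cancel_right₀ hden.ne']
  rw [im_mul_one_sub_mul_pow_mul_conj t hw, hgeom] at hnormSq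
  refine pos_of_mul_pos_left ?_ hden.le
  calc 0 < (1 - ‖t‖ ^ 2) ^ 2 * (t.im ^ 2 * S - w * (t.im * (t ^ (p + 1)).im)) :=
        mul_pos hρ (sub_pos.2 hbound)
    _ = _ := by rw [mul_right_comm, hnormSq]; ring

theorem one_sub_mul_pow_mul_pos {x w : ℝ} (hx : |x| ≠ 1) (hw : |w| = 1) {p : ℕ}
    (hpw : 1 ≤ p ∨ w = -1) : 0 < (1 - w * x ^ p) * (1 - w * x ^ (p + 2)) := by
  rcases Nat.eq_zero_or_pos p with rfl | hp
  · rw [hpw.resolve_left (by omega), pow_zero, zero_add]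
    nlinarith [sq_nonneg x]
  set y := w * x ^ p
  have hy : |y| = |x| ^ p := by rw [abs_mul, hw, one_mul, abs_pow]
  have hx2 : w * x ^ (p + 2) = y * x ^ 2 := by ring
  rw [hx2, ← sq_abs x]
  rcases hx.lt_or_gt with h | h
  · have hy1 : |y| < 1 := hy ▸ pow_lt_one₀ (abs_nonneg x) h hp.ne'
    have hx1 : |x| ^ 2 < 1 := pow_lt_one₀ (abs_nonneg x) h two_ne_zero
    have := abs_lt.1 hy1
    apply mul_pos <;> nlinarith [abs_nonneg x, sq_nonneg |x|]
  · have hy1 : 1 < |y| := hy ▸ one_lt_pow₀ h hp.ne'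
    have hx1 : 1 < |x| ^ 2 := one_lt_pow₀ h two_ne_zero
    rcases lt_abs.1 hy1 with hy' | hy'
    · apply mul_pos_of_neg_of_neg <;> nlinarith
    · apply mul_pos <;> nlinarith

theorem exists_forall_re_mul_powRatio_pos {t : ℂ} (ht : ‖t‖ ≠ 1) :
    ∃ c : ℂ, ∀ (w : ℝ) (p : ℕ), |w| = 1 → (1 ≤ p ∨ w = -1) →
      0 < (c * powRatio w p t).re := by
  rcases eq_or_ne t.im 0 with him | him
  · refine ⟨1, fun w p hw hpw => ?_⟩
    have htx : t = (t.re : ℂ) := ext rfl (by simp [him])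
    rw [htx, norm_real, Real.norm_eq_abs] at ht
    rw [one_mul, htx, powRatio]
    norm_cast
    exact div_pos_iff.2 (mul_pos_iff.1 (one_sub_mul_pow_mul_pos ht hw hpw))
  · refine ⟨-I * ((t.im * (1 - ‖t‖ ^ 2) : ℝ) * t), fun w p hw hpw => ?_⟩
    have hI : ∀ z : ℂ, (-I * z).re = z.im := fun z => by simp
    rw [mul_assoc, hI, mul_assoc, im_ofReal_mul, mul_comm]
    exact im_mul_powRatio_mul_pos him ht hw hpw

theorem one_sub_X_sq_mul_polyA (n : ℕ) :
    (1 - X ^ 2 : ℂ[X]) * polyA n = 1 - X ^ (2 * n) := by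
  simp_rw [polyA, pow_mul]
  exact mul_neg_geom_sum _ _

theorem eval_polyA_ne_zero {t : ℂ} (ht : ‖t‖ ≠ 1) {n : ℕ} (hn : n ≠ 0) :
    (polyA n).eval t ≠ 0 := by
  intro h
  have := congrArg (eval t) (one_sub_X_sq_mul_polyA n)
  rw [eval_mul, h, mul_zero, eval_sub, eval_one, eval_pow, eval_X] at this
  exact one_sub_mul_pow_ne_zero ht (w := 1) (n := 2 * n) norm_one (by omega)
    (by simpa using this.symm)

theorem eval_polyB_div_eval_polyA {t : ℂ} (ht : ‖t‖ ≠ 1) {k : ℕ} (hk : k ≠ 0) :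
    (polyB k).eval t / (polyA k).eval t = powRatio 1 (2 * (k - 1)) t := by
  have ht2 : 1 - t ^ 2 ≠ 0 := by
    simpa using one_sub_mul_pow_ne_zero ht (w := 1) norm_one two_ne_zero
  rw [← mul_div_mul_left _ _ ht2]
  have hA := congrArg (eval t) (one_sub_X_sq_mul_polyA k)
  have hB := congrArg (eval t) (one_sub_X_sq_mul_polyA (k - 1))
  simp only [eval_mul, eval_sub, eval_one, eval_pow, eval_X] at hA hB
  rw [polyB, ← polyA, hA, hB, powRatio, show 2 * (k - 1) + 2 = 2 * k by omega]
  simp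

theorem eval_ne_zero_of_one_sub_X_sq_mul_eq {t : ℂ} (ht : ‖t‖ ≠ 1) {f : ℂ[X]} {a b : ℕ}
    (ha : a ≠ 0) (hb : b ≠ 0) (hf : (1 - X ^ 2) * f = (1 + X ^ a) * (1 - X ^ b)) :
    f.eval t ≠ 0 := by
  intro h
  have := congrArg (eval t) hf
  simp only [eval_mul, h, mul_zero, eval_add, eval_sub, eval_one, eval_pow, eval_X] at this
  rcases mul_eq_zero.1 this.symm with h1 | h1
  · exact one_sub_mul_pow_ne_zero ht (w := -1) (by simp) ha (by simpa using h1)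
  · exact one_sub_mul_pow_ne_zero ht (w := 1) norm_one hb (by simpa using h1)

theorem eval_div_eval_eq_powRatio {t : ℂ} (ht : ‖t‖ ≠ 1) {d e : ℂ[X]} {m : ℕ} (hm : 4 ≤ m)
    (hd : (1 - X ^ 2) * d = (1 + X ^ (m - 2)) * (1 - X ^ m))
    (he : (1 - X ^ 2) * e = (1 + X ^ (m - 4)) * (1 - X ^ m)) :
    e.eval t / d.eval t = powRatio (-1) (m - 4) t := by
  have ht2 : 1 - t ^ 2 ≠ 0 := by
    simpa using one_sub_mul_pow_ne_zero ht (w := 1) norm_one two_ne_zero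
  have htm : 1 - t ^ m ≠ 0 := by
    simpa using one_sub_mul_pow_ne_zero ht (w := 1) norm_one (by omega : m ≠ 0)
  have hD := congrArg (eval t) hd
  have hE := congrArg (eval t) he
  simp only [eval_mul, eval_add, eval_sub, eval_one, eval_pow, eval_X] at hD hE
  rw [← mul_div_mul_left _ _ ht2, hD, hE, mul_div_mul_right _ _ htm, powRatio,
    show m - 4 + 2 = m - 2 by omega]
  simp

theorem sum_powRatio_ne_zero {t : ℂ} (ht : ‖t‖ ≠ 1) {ι κ : Type*} [Fintype ι] [Fintype κ]
    (p : ι → ℕ) (q : κ → ℕ) (hpq : (∃ j, p j ≠ 0) ∨ Nonempty κ) :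
    ∑ j, powRatio 1 (p j) t + ∑ r, powRatio (-1) (q r) t ≠ 0 := by
  obtain ⟨c, hc⟩ := exists_forall_re_mul_powRatio_pos ht
  have hA : ∀ j, 0 ≤ (c * powRatio 1 (p j) t).re := fun j => by
    rcases Nat.eq_zero_or_pos (p j) with h | h
    · simp [h, powRatio]
    · exact (hc _ _ (by simp) (Or.inl h)).le
  have hD : ∀ r, 0 < (c * powRatio (-1) (q r) t).re := fun r =>
    hc _ _ (by simp) (Or.inr rfl)
  intro hS
  suffices 0 < (c * (∑ j, powRatio 1 (p j) t + ∑ r, powRatio (-1) (q r) t)).re by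
    simp [hS] at this
  rw [mul_add, add_re, mul_sum, mul_sum, re_sum, re_sum]
  rcases hpq with ⟨j, hj⟩ | hκ
  · have hj' := hc 1 (p j) (by simp) (Or.inl (Nat.pos_of_ne_zero hj))
    exact add_pos_of_pos_of_nonneg (sum_pos' (fun j _ => hA j) ⟨j, mem_univ j, hj'⟩)
      (sum_nonneg fun r _ => (hD r).le)
  · exact add_pos_of_nonneg_of_pos (sum_nonneg fun j _ => hA j)
      (sum_pos (fun r _ => hD r) univ_nonempty)

theorem sum_powRatio_eq_zero_of_eval_eq_zero {t : ℂ} (ht : ‖t‖ ≠ 1) {K M : ℕ}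
    {k : Fin K → ℕ} (hk : ∀ j, 1 ≤ k j) {m : Fin M → ℕ} (hm : ∀ j, 4 ≤ m j)
    {d e : Fin M → ℂ[X]}
    (hd : ∀ r, (1 - X ^ 2) * d r = (1 + X ^ (m r - 2)) * (1 - X ^ (m r)))
    (he : ∀ r, (1 - X ^ 2) * e r = (1 + X ^ (m r - 4)) * (1 - X ^ (m r)))
    (hroot : ((∑ j, polyB (k j) * (∏ i ∈ univ.erase j, polyA (k i)) * ∏ r, d r)
      + ∑ j, e j * (∏ i, polyA (k i)) * ∏ r ∈ univ.erase j, d r).eval t = 0) :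
    ∑ j, powRatio 1 (2 * (k j - 1)) t + ∑ r, powRatio (-1) (m r - 4) t = 0 := by
  simp only [eval_add, eval_finsetSum, eval_mul, eval_prod, ← sum_mul] at hroot
  set A := fun i => (polyA (k i)).eval t
  set D := fun r => (d r).eval t
  have hA : ∀ i, A i ≠ 0 := fun i => eval_polyA_ne_zero ht (Nat.one_le_iff_ne_zero.1 (hk i))
  have hD : ∀ r, D r ≠ 0 := fun r =>
    eval_ne_zero_of_one_sub_X_sq_mul_eq ht (by grind) (by grind) (hd r)
  rw [sum_mul_prod_erase_eq_prod_mul_sum_div _ _ _ fun i _ => hA i,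
    sum_congr rfl fun j _ => eval_polyB_div_eval_polyA ht (Nat.one_le_iff_ne_zero.1 (hk j))]
    at hroot
  have hE : ∑ j, (e j).eval t * (∏ i, A i) * ∏ r ∈ univ.erase j, D r
      = (∏ i, A i) * ((∏ r, D r) * ∑ r, powRatio (-1) (m r - 4) t) := by
    rw [← sum_congr rfl fun r _ => eval_div_eval_eq_powRatio ht (hm r) (hd r) (he r),
      ← sum_mul_prod_erase_eq_prod_mul_sum_div _ _ _ fun r _ => hD r, mul_sum]
    exact sum_congr rfl fun _ _ => by ring
  have hprod : (∏ i, A i) * ∏ r, D r ≠ 0 :=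
    mul_ne_zero (prod_ne_zero_iff.2 fun i _ => hA i) (prod_ne_zero_iff.2 fun r _ => hD r)
  refine (mul_eq_zero.1 ?_).resolve_left hprod
  rw [← hroot, hE]
  ring

theorem unimodular_AD_general
    (K M : ℕ)
    (k : Fin K → ℕ) (hk : ∀ j, 1 ≤ k j)
    (m : Fin M → ℕ) (hm : ∀ j, 4 ≤ m j)
    (hnontriv : (∃ j, 2 ≤ k j) ∨ 1 ≤ M)
    (d e : Fin M → Polynomial ℂ)
    (hd : ∀ r, (1 - Polynomial.X ^ 2) * d r
        = (1 + Polynomial.X ^ (m r - 2)) * (1 - Polynomial.X ^ (m r)))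
    (he : ∀ r, (1 - Polynomial.X ^ 2) * e r
        = (1 + Polynomial.X ^ (m r - 4)) * (1 - Polynomial.X ^ (m r)))
    (F : Polynomial ℂ)
    (hF : F =
        (∑ j : Fin K, polyB (k j) * (∏ i ∈ Finset.univ.erase j, polyA (k i)) * ∏ r, d r)
      + (∑ j : Fin M, e j * (∏ i, polyA (k i)) * ∏ r ∈ Finset.univ.erase j, d r)) :
    ∀ t₀ : ℂ, F.IsRoot t₀ → ‖t₀‖ = 1 := by
  intro t hroot
  by_contra ht
  rw [hF, IsRoot.def] at hroot
  refine sum_powRatio_ne_zero ht (fun j => 2 * (k j - 1)) (fun r => m r - 4) ?_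
    (sum_powRatio_eq_zero_of_eval_eq_zero ht hk hm hd he hroot)
  rcases hnontriv with ⟨j, hj⟩ | hM
  · exact Or.inl ⟨j, by omega⟩
  · exact Or.inr ⟨⟨0, hM⟩⟩

/-- Unimodularity of the Poincaré polynomial of the Lie algebra of derivations of the moduli
algebra of a semisimple singularity of type `A ⊕ D`. -/
theorem unimodular_AD
    (K M : ℕ) (hKM : 1 ≤ K + M)
    (k : Fin K → ℕ) (hk : ∀ j, 1 ≤ k j)
    (m : Fin M → ℕ) (hm : ∀ j, 4 ≤ m j)
    (hnontriv : (∃ j, 2 ≤ k j) ∨ 1 ≤ M)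
    (d e : Fin M → Polynomial ℂ)
    (hd : ∀ r, (1 - Polynomial.X ^ 2) * d r
        = (1 + Polynomial.X ^ (m r - 2)) * (1 - Polynomial.X ^ (m r)))
    (he : ∀ r, (1 - Polynomial.X ^ 2) * e r
        = (1 + Polynomial.X ^ (m r - 4)) * (1 - Polynomial.X ^ (m r)))
    (F : Polynomial ℂ)
    (hF : F =
        (∑ j : Fin K, polyB (k j) * (∏ i ∈ Finset.univ.erase j, polyA (k i)) * ∏ r, d r)
      + (∑ j : Fin M, e j * (∏ i, polyA (k i)) * ∏ r ∈ Finset.univ.erase j, d r)) :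
    ∀ t₀ : ℂ, F.IsRoot t₀ → ‖t₀‖ = 1 :=
  unimodular_AD_general K M k hk m hm hnontriv d e hd he F hF
end

section
/- Let a < b be real numbers, let p_1 < p_2 < ⋯ < p_n be points of [a, b], and let φ : ℝ → ℝ be continuous on [a, b] ∖ {p_1, …, p_n}. Assume each p_i is a simple pole of φ: there is a nonzero real number r_i (the residue) such that (x − p_i)·φ(x) → r_i as x → p_i. Let n₊ be the number of indices i with r_i > 0 and n₋ the number with r_i < 0. Then φ has at least |n₊ − n₋| − 1 distinct zeros in [a, b]. -/
open Filter Topology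

lemma key_pos (a b P Q : ℝ) (hPQ : P < Q) (haP : a ≤ P) (hQb : Q ≤ b)
    (φ : ℝ → ℝ) (hcont : ContinuousOn φ (Set.Ioo P Q)) (rP rQ : ℝ) (hrP : 0 < rP) (hrQ : 0 < rQ)
    (hresP : Tendsto (fun x => (x - P) * φ x) (𝓝[Set.Icc a b \ {P}] P) (𝓝 rP))
    (hresQ : Tendsto (fun x => (x - Q) * φ x) (𝓝[Set.Icc a b \ {Q}] Q) (𝓝 rQ)) :
    ∃ z ∈ Set.Ioo P Q, φ z = 0 := by
  have hsubP : Set.Ioo P Q ⊆ Set.Icc a b \ {P} := fun x hx =>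
    ⟨⟨haP.trans hx.1.le, hx.2.le.trans hQb⟩, by simp [hx.1.ne']⟩
  have hFP : (𝓝[Set.Ioo P Q] P).NeBot := by
    rw [← mem_closure_iff_nhdsWithin_neBot, closure_Ioo hPQ.ne]
    exact ⟨le_rfl, hPQ.le⟩
  have h1 : ∀ᶠ x in 𝓝[Set.Ioo P Q] P, 0 < (x - P) * φ x :=
    (hresP.mono_left (nhdsWithin_mono _ hsubP)).eventually (eventually_gt_nhds hrP)
  obtain ⟨u, hu1, hu2⟩ := (h1.and self_mem_nhdsWithin).exists
  have hφu : 0 < φ u := by nlinarith [hu2.1, hu2.2]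
  have huQ : u < Q := hu2.2
  have hsubQ : Set.Ioo u Q ⊆ Set.Icc a b \ {Q} := fun x hx =>
    ⟨⟨haP.trans (hu2.1.le.trans hx.1.le), hx.2.le.trans hQb⟩, by simp [hx.2.ne]⟩
  have hFQ : (𝓝[Set.Ioo u Q] Q).NeBot := by
    rw [← mem_closure_iff_nhdsWithin_neBot, closure_Ioo huQ.ne]
    exact ⟨huQ.le, le_rfl⟩
  have h2 : ∀ᶠ x in 𝓝[Set.Ioo u Q] Q, 0 < (x - Q) * φ x :=
    (hresQ.mono_left (nhdsWithin_mono _ hsubQ)).eventually (eventually_gt_nhds hrQ)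
  obtain ⟨v, hv1, hv2⟩ := (h2.and self_mem_nhdsWithin).exists
  have hφv : φ v < 0 := by nlinarith [hv2.1, hv2.2]
  have huv : u ≤ v := hv2.1.le
  have hIcc : Set.Icc u v ⊆ Set.Ioo P Q := fun x hx =>
    ⟨hu2.1.trans_le hx.1, hx.2.trans_lt hv2.2⟩
  obtain ⟨z, hz, hz0⟩ := intermediate_value_Icc' huv (hcont.mono hIcc) ⟨hφv.le, hφu.le⟩
  exact ⟨z, hIcc hz, hz0⟩

lemma comb (s : ℕ → ℤ) (hs : ∀ i, s i = 1 ∨ s i = -1) :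
    ∀ n, |∑ i ∈ Finset.range n, s i| ≤
      1 + ((Finset.range (n-1)).filter (fun i => s i = s (i+1))).card := by
  intro n
  induction n using Nat.strong_induction_on with
  | _ n ih =>
    match n with
    | 0 => simp
    | 1 => rcases hs 0 with h | h <;> simp [h]
    | (m+2) =>
      by_cases hcase : s m = s (m+1)
      · have h1 := ih (m+1) (by omega)
        have hfil : ((Finset.range (m+2-1)).filter (fun i => s i = s (i+1))).card
            = ((Finset.range (m+1-1)).filter (fun i => s i = s (i+1))).card + 1 := by
          have : Finset.range (m+1) = insert m (Finset.range m) := by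
            rw [Finset.range_add_one]
          simp only [show m+2-1 = m+1 from rfl, show m+1-1 = m from rfl, this,
            Finset.filter_insert, if_pos hcase]
          rw [Finset.card_insert_of_notMem (by simp)]
        have habs : |∑ i ∈ Finset.range (m+2), s i| ≤ |∑ i ∈ Finset.range (m+1), s i| + 1 := by
          rw [Finset.sum_range_succ]
          calc |∑ i ∈ Finset.range (m+1), s i + s (m+1)|
              ≤ |∑ i ∈ Finset.range (m+1), s i| + |s (m+1)| := abs_add_le _ _
            _ ≤ _ := by rcases hs (m+1) with h | h <;> simp [h]
        omega
      · have h2 := ih m (by omega)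
        have hsum : ∑ i ∈ Finset.range (m+2), s i = ∑ i ∈ Finset.range m, s i := by
          rw [Finset.sum_range_succ, Finset.sum_range_succ]
          rcases hs m with h | h <;> rcases hs (m+1) with h' | h' <;>
            simp [h, h'] at hcase ⊢
        have hfil : ((Finset.range (m-1)).filter (fun i => s i = s (i+1))).card
            ≤ ((Finset.range (m+2-1)).filter (fun i => s i = s (i+1))).card :=
          Finset.card_le_card (Finset.filter_subset_filter _
            (Finset.range_subset_range.mpr (by omega)))
        rw [hsum]
        omega

/-- A real function on `[a,b]` with only simple poles `p_1 < ⋯ < p_n`, of which `n₊` have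
positive residue and `n₋` negative residue, has at least `|n₊ - n₋| - 1` distinct zeros
on `[a,b]`. -/
theorem zeros_from_poles
    (a b : ℝ) (hab : a < b) (n : ℕ) (p : Fin n → ℝ) (hmono : StrictMono p)
    (hmem : ∀ i, p i ∈ Set.Icc a b)
    (φ : ℝ → ℝ)
    (hcont : ContinuousOn φ (Set.Icc a b \ Set.range p))
    (r : Fin n → ℝ) (hr : ∀ i, r i ≠ 0)
    (hres : ∀ i, Filter.Tendsto (fun x => (x - p i) * φ x)
      (𝓝[Set.Icc a b \ {p i}] (p i)) (𝓝 (r i))) :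
    ∃ S : Finset ℝ, (↑S : Set ℝ) ⊆ Set.Icc a b \ Set.range p ∧ (∀ x ∈ S, φ x = 0) ∧
      ((((Finset.univ.filter fun i => 0 < r i).card : ℤ)
        - ((Finset.univ.filter fun i => r i < 0).card : ℤ)).natAbs - 1 : ℤ) ≤ S.card := by
  classical
  set s : ℕ → ℤ := fun i => if h : i < n then (if 0 < r ⟨i, h⟩ then 1 else -1) else 1 with hs_def
  have hs : ∀ i, s i = 1 ∨ s i = -1 := by
    intro i; simp only [hs_def]; split_ifs <;> simp
  have hsum : ∑ i ∈ Finset.range n, s i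
      = ((Finset.univ.filter fun i => 0 < r i).card : ℤ)
        - ((Finset.univ.filter fun i => r i < 0).card : ℤ) := by
    rw [Finset.sum_range fun i => s i]
    have : ∀ i : Fin n, s i = (if 0 < r i then (1:ℤ) else 0) - (if r i < 0 then 1 else 0) := by
      intro i
      simp only [hs_def, dif_pos i.isLt, Fin.eta]
      rcases (hr i).lt_or_gt with h | h
      · simp [h, not_lt.mpr h.le]
      · simp [h, not_lt.mpr h.le]
    rw [Finset.sum_congr rfl (fun i _ => this i), Finset.sum_sub_distrib,
      Finset.sum_boole, Finset.sum_boole]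
  set P : ℕ → ℝ := fun i => if h : i < n then p ⟨i, h⟩ else 0 with hP_def
  set K : Finset ℕ := (Finset.range (n-1)).filter (fun i => s i = s (i+1)) with hK_def
  have hKlt : ∀ i ∈ K, i + 1 < n := by
    intro i hi
    have := Finset.mem_range.mp (Finset.mem_filter.mp hi).1
    omega
  have hzero : ∀ i ∈ K, ∃ z, z ∈ Set.Ioo (P i) (P (i+1)) ∧
      z ∈ Set.Icc a b \ Set.range p ∧ φ z = 0 := by
    intro i hi
    have h2 : i + 1 < n := hKlt i hi
    have h1 : i < n := by omega
    have hsi : s i = s (i+1) := (Finset.mem_filter.mp hi).2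
    have hP1 : P i = p ⟨i, h1⟩ := dif_pos h1
    have hP2 : P (i+1) = p ⟨i+1, h2⟩ := dif_pos h2
    have hlt : p ⟨i, h1⟩ < p ⟨i+1, h2⟩ := hmono (by simp [Fin.lt_def])
    have hIoo : Set.Ioo (p ⟨i, h1⟩) (p ⟨i+1, h2⟩) ⊆ Set.Icc a b \ Set.range p := by
      intro x hx
      refine ⟨⟨(hmem ⟨i, h1⟩).1.trans hx.1.le, hx.2.le.trans (hmem ⟨i+1, h2⟩).2⟩, ?_⟩
      rintro ⟨k, rfl⟩
      have hik := hmono.lt_iff_lt.mp hx.1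
      have hki := hmono.lt_iff_lt.mp hx.2
      simp [Fin.lt_def] at hik hki
      omega
    have hcont' : ContinuousOn φ (Set.Ioo (p ⟨i, h1⟩) (p ⟨i+1, h2⟩)) := hcont.mono hIoo
    have hsign : 0 < r ⟨i, h1⟩ ↔ 0 < r ⟨i+1, h2⟩ := by
      simp only [hs_def, dif_pos h1, dif_pos h2] at hsi
      by_cases hA : 0 < r ⟨i, h1⟩ <;> by_cases hB : 0 < r ⟨i+1, h2⟩ <;>
        simp [hA, hB] at hsi ⊢
    rw [hP1, hP2]
    by_cases hpos : 0 < r ⟨i, h1⟩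
    · obtain ⟨z, hz, h0⟩ := key_pos a b _ _ hlt (hmem ⟨i, h1⟩).1 (hmem ⟨i+1, h2⟩).2 φ hcont'
        _ _ hpos (hsign.mp hpos) (hres ⟨i, h1⟩) (hres ⟨i+1, h2⟩)
      exact ⟨z, hz, hIoo hz, h0⟩
    · have hneg1 : r ⟨i, h1⟩ < 0 := (hr _).lt_or_gt.resolve_right hpos
      have hneg2 : r ⟨i+1, h2⟩ < 0 := (hr _).lt_or_gt.resolve_right (fun h => hpos (hsign.mpr h))
      obtain ⟨z, hz, h0⟩ := key_pos a b _ _ hlt (hmem ⟨i, h1⟩).1 (hmem ⟨i+1, h2⟩).2 (fun x => -φ x)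
        hcont'.neg _ _ (neg_pos.mpr hneg1) (neg_pos.mpr hneg2)
        (by simpa [mul_neg] using (hres ⟨i, h1⟩).neg)
        (by simpa [mul_neg] using (hres ⟨i+1, h2⟩).neg)
      exact ⟨z, hz, hIoo hz, neg_eq_zero.mp h0⟩
  set g : ℕ → ℝ := fun i => if h : i ∈ K then (hzero i h).choose else 0 with hg_def
  have hg : ∀ i ∈ K, g i ∈ Set.Ioo (P i) (P (i+1)) ∧
      g i ∈ Set.Icc a b \ Set.range p ∧ φ (g i) = 0 := by
    intro i h
    simp only [hg_def, dif_pos h]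
    exact (hzero i h).choose_spec
  have hPmono : ∀ i j, i < j → j < n → P i < P j := by
    intro i j hij hjn
    have hin : i < n := lt_trans hij hjn
    simp only [hP_def, dif_pos hin, dif_pos hjn]
    exact hmono (by simpa [Fin.lt_def] using hij)
  have hgmono : ∀ i ∈ K, ∀ j ∈ K, i < j → g i < g j := by
    intro i hi j hj hij
    have hjn : j + 1 < n := hKlt j hj
    have h1 : g i < P (i+1) := (hg i hi).1.2
    have h2 : P j < g j := (hg j hj).1.1
    have h3 : P (i+1) ≤ P j := by
      rcases eq_or_lt_of_le (Nat.succ_le_of_lt hij) with h | h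
      · exact le_of_eq (congrArg P h)
      · exact (hPmono _ _ h (by omega)).le
    linarith
  have hinj : Set.InjOn g ↑K := by
    intro i hi j hj hij
    by_contra hne
    rcases lt_or_gt_of_ne hne with h | h
    · exact absurd hij (hgmono i hi j hj h).ne
    · exact absurd hij.symm (hgmono j hj i hi h).ne
  refine ⟨K.image g, ?_, ?_, ?_⟩
  · intro x hx
    obtain ⟨i, hi, rfl⟩ := Finset.mem_image.mp (Finset.mem_coe.mp hx)
    exact (hg i hi).2.1
  · intro x hx
    obtain ⟨i, hi, rfl⟩ := Finset.mem_image.mp hx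
    exact (hg i hi).2.2
  · rw [Finset.card_image_of_injOn hinj]
    have hcomb := comb s hs n
    rw [hsum, ← hK_def] at hcomb
    rw [Int.natCast_natAbs]
    linarith
end

section
/- Let a < b be real numbers, let p_1 < p_2 < ⋯ < p_n be points of the open interval (a, b), and let φ be a real function defined and real-analytic on [a, b] ∖ {p_1, …, p_n}, not identically zero on any connected component of [a, b] ∖ {p_1, …, p_n}. Assume each p_i is a simple pole of φ: there is a nonzero real r_i with (x − p_i)·φ(x) → r_i as x → p_i. Assume φ(a) ≠ 0 and φ(b) ≠ 0, let n₊ (resp. n₋) be the number of i with r_i > 0 (resp. r_i < 0), and set c = 1 if φ(a)·φ(b) < 0 and c = 0 otherwise. Then the number N of zeros of φ in [a, b], counted with multiplicity (the order of vanishing of the analytic function φ at the zero), satisfies N ≥ |n₊ − n₋| − c, and N − (|n₊ − n₋| − c) is an even number. -/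
/-!
Away from its zeros and poles `φ` is continuous and nonvanishing, so its sign is locally constant
and `sign φ(b) - sign φ(a)` is the sum of the jumps of the sign across the zeros and poles. At a
simple pole with residue `r` the sign jumps by `2 sign r`; at a zero of multiplicity `m` it jumps
by `2j` with `|j| ≤ m` and `j ≡ m (mod 2)` (`j = 0` for even `m`, `j = ±1` for odd `m`). Summing,
`n₊ - n₋ = e - J` where `2e = sign φ(b) - sign φ(a)`, so `|e| = c`, and `|J| ≤ N`, `J ≡ N (mod 2)`.
Hence `|n₊ - n₋| - c ≤ |J| ≤ N`, with the same parity as `J`.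
-/

open Filter Topology Finset

theorem IsPreconnected.sign_eq_of_ne_zero {X α : Type*} [TopologicalSpace X] [Zero α]
    [LinearOrder α] [TopologicalSpace α] [OrderTopology α] {s : Set X} (hs : IsPreconnected s)
    {f : X → α} (hf : ContinuousOn f s) (hf0 : ∀ x ∈ s, f x ≠ 0) {x y : X} (hx : x ∈ s)
    (hy : y ∈ s) : SignType.sign (f x) = SignType.sign (f y) :=
  hs.constant (fun z hz => (continuousAt_sign_of_ne_zero (hf0 z hz)).comp_continuousWithinAt
    (hf z hz)) hx hy

theorem Filter.Tendsto.eventually_sign_eq {ι α : Type*} [Zero α] [LinearOrder α]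
    [TopologicalSpace α] [OrderTopology α] {l : Filter ι} {g : ι → α} {r : α}
    (h : Tendsto g l (𝓝 r)) (hr : r ≠ 0) : ∀ᶠ x in l, SignType.sign (g x) = SignType.sign r :=
  tendsto_pure.1 <| nhds_discrete SignType ▸ (continuousAt_sign_of_ne_zero hr).tendsto.comp h

section OneSidedSigns

variable {f : ℝ → ℝ}

theorem eventually_nhdsGT_sign_eq_of_tendsto_sub_mul {p r : ℝ}
    (h : Tendsto (fun x => (x - p) * f x) (𝓝[≠] p) (𝓝 r)) (hr : r ≠ 0) :
    ∀ᶠ x in 𝓝[>] p, SignType.sign (f x) = SignType.sign r := by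
  filter_upwards [nhdsGT_le_nhdsNE p (h.eventually_sign_eq hr), self_mem_nhdsWithin] with x hx hpx
  rwa [sign_mul, sign_pos (sub_pos.2 hpx), one_mul] at hx

theorem eventually_nhdsLT_sign_eq_of_tendsto_sub_mul {p r : ℝ}
    (h : Tendsto (fun x => (x - p) * f x) (𝓝[≠] p) (𝓝 r)) (hr : r ≠ 0) :
    ∀ᶠ x in 𝓝[<] p, SignType.sign (f x) = -SignType.sign r := by
  filter_upwards [nhdsLT_le_nhdsNE p (h.eventually_sign_eq hr), self_mem_nhdsWithin] with x hx hxp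
  rw [← hx, sign_mul, sign_neg (sub_neg.2 hxp), neg_one_mul, neg_neg]

theorem eventually_sign_eq_of_eventuallyEq_pow_mul {g : ℝ → ℝ} {z : ℝ} {m : ℕ}
    (hf : f =ᶠ[𝓝 z] fun y => (y - z) ^ m * g y) (hg : ContinuousAt g z) (hgz : g z ≠ 0) :
    ∀ᶠ y in 𝓝 z, SignType.sign (f y) = SignType.sign (y - z) ^ m * SignType.sign (g z) := by
  filter_upwards [hf, hg.tendsto.eventually_sign_eq hgz] with y hfy hgy
  rw [hfy, sign_mul, sign_pow, hgy]

theorem eventually_nhdsGT_sign_eq_of_eventuallyEq_pow_mul {g : ℝ → ℝ} {z : ℝ} {m : ℕ}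
    (hf : f =ᶠ[𝓝 z] fun y => (y - z) ^ m * g y) (hg : ContinuousAt g z) (hgz : g z ≠ 0) :
    ∀ᶠ y in 𝓝[>] z, SignType.sign (f y) = SignType.sign (g z) := by
  filter_upwards [nhdsWithin_le_nhds (eventually_sign_eq_of_eventuallyEq_pow_mul hf hg hgz),
    self_mem_nhdsWithin] with y hy hzy
  rw [hy, sign_pos (sub_pos.2 hzy), one_pow, one_mul]

theorem eventually_nhdsLT_sign_eq_of_eventuallyEq_pow_mul {g : ℝ → ℝ} {z : ℝ} {m : ℕ}
    (hf : f =ᶠ[𝓝 z] fun y => (y - z) ^ m * g y) (hg : ContinuousAt g z) (hgz : g z ≠ 0) :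
    ∀ᶠ y in 𝓝[<] z, SignType.sign (f y) = (-1) ^ m * SignType.sign (g z) := by
  filter_upwards [nhdsWithin_le_nhds (eventually_sign_eq_of_eventuallyEq_pow_mul hf hg hgz),
    self_mem_nhdsWithin] with y hy hyz
  rw [hy, sign_neg (sub_neg.2 hyz)]

end OneSidedSigns

theorem sign_sub_sign_eq_sum_jumps {f : ℝ → ℝ} {sl sr : ℝ → SignType} (T : Finset ℝ) {a b : ℝ}
    (hab : a ≤ b) (hT : ∀ t ∈ T, t ∈ Set.Ioo a b) (hf : ContinuousOn f (Set.Icc a b \ T))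
    (hf0 : ∀ x ∈ Set.Icc a b \ T, f x ≠ 0)
    (hl : ∀ t ∈ T, ∀ᶠ x in 𝓝[<] t, SignType.sign (f x) = sl t)
    (hr : ∀ t ∈ T, ∀ᶠ x in 𝓝[>] t, SignType.sign (f x) = sr t) :
    (SignType.sign (f b) : ℤ) - SignType.sign (f a) = ∑ t ∈ T, ((sr t : ℤ) - sl t) := by
  classical
  induction T using Finset.induction_on_max generalizing b with
  | empty =>
    simp only [coe_empty, Set.sdiff_empty] at hf hf0
    rw [isPreconnected_Icc.sign_eq_of_ne_zero hf hf0 (Set.right_mem_Icc.2 hab)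
      (Set.left_mem_Icc.2 hab), sub_self, sum_empty]
  | insert t s hst ih =>
    have ht := hT t (mem_insert_self t s)
    have hts : t ∉ s := fun h => (hst t h).false
    obtain ⟨x, hsx, hax, hxt, hx⟩ : ∃ x, (∀ u ∈ s, u < x) ∧ a < x ∧ x < t ∧
        SignType.sign (f x) = sl t := by
      refine Eventually.exists (f := 𝓝[<] t) <|
        ((eventually_all_finset s).2 fun u hu => ?_).and ?_
      · exact nhdsWithin_le_nhds (eventually_gt_nhds (hst u hu))
      · filter_upwards [nhdsWithin_le_nhds (eventually_gt_nhds ht.1), self_mem_nhdsWithin,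
          hl t (mem_insert_self t s)] with x hax hxt hx using ⟨hax, hxt, hx⟩
    obtain ⟨y, hty, hyb, hy⟩ : ∃ y, t < y ∧ y < b ∧ SignType.sign (f y) = sr t := by
      refine Eventually.exists (f := 𝓝[>] t) ?_
      filter_upwards [self_mem_nhdsWithin, nhdsWithin_le_nhds (eventually_lt_nhds ht.2),
        hr t (mem_insert_self t s)] with y hty hyb hy using ⟨hty, hyb, hy⟩
    have hyb_sub : Set.Icc y b ⊆ Set.Icc a b \ ↑(insert t s) := fun u hu =>
      ⟨⟨by linarith [hu.1], hu.2⟩, by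
        simp only [coe_insert, Set.mem_insert_iff, mem_coe, not_or]
        exact ⟨by linarith [hu.1], fun hus => by linarith [hst u hus, hu.1]⟩⟩
    have hsign_b : SignType.sign (f y) = SignType.sign (f b) :=
      isPreconnected_Icc.sign_eq_of_ne_zero (hf.mono hyb_sub) (fun u hu => hf0 u (hyb_sub hu))
        (Set.left_mem_Icc.2 hyb.le) (Set.right_mem_Icc.2 hyb.le)
    have hax_sub : Set.Icc a x \ s ⊆ Set.Icc a b \ ↑(insert t s) := fun u hu =>
      ⟨⟨hu.1.1, by linarith [hu.1.2]⟩, by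
        simp only [coe_insert, Set.mem_insert_iff, not_or]
        exact ⟨by linarith [hu.1.2], hu.2⟩⟩
    have ih_x := ih hax.le (fun u hu => ⟨(hT u (mem_insert_of_mem hu)).1, hsx u hu⟩)
      (hf.mono hax_sub) (fun u hu => hf0 u (hax_sub hu))
      (fun u hu => hl u (mem_insert_of_mem hu)) (fun u hu => hr u (mem_insert_of_mem hu))
    rw [sum_insert hts, ← ih_x, ← hsign_b, hy, hx]
    ring

def ParityBound (D N : ℤ) : Prop := |D| ≤ N ∧ Even (N - D)

theorem ParityBound.sum {ι : Type*} {s : Finset ι} {D N : ι → ℤ}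
    (h : ∀ i ∈ s, ParityBound (D i) (N i)) : ParityBound (∑ i ∈ s, D i) (∑ i ∈ s, N i) :=
  ⟨(abs_sum_le_sum_abs D s).trans (sum_le_sum fun i hi => (h i hi).1), by
    rw [← sum_sub_distrib]; exact even_sum _ fun i hi => (h i hi).2⟩

theorem ParityBound.abs_sub_abs {D N : ℤ} (h : ParityBound D N) (e : ℤ) :
    ParityBound (|e - D| - |e|) N := by
  refine ⟨(abs_abs_sub_abs_le_abs_sub _ _).trans ?_, ?_⟩
  · rw [sub_sub_cancel_left, abs_neg]; exact h.1
  · have key : N - (|e - D| - |e|) = (N - D) - ((e - D) + |e - D|) + (e + |e|) := by ring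
    rw [key]
    refine (h.2.sub ?_).add ?_ <;> simp [Int.even_add, even_abs]

theorem exists_parityBound_of_sign_sub_neg_one_pow_mul (s : SignType) (hs : s ≠ 0) (m : ℕ) :
    ∃ j : ℤ, (s : ℤ) - ((-1) ^ m * s : SignType) = 2 * j ∧ ParityBound j m := by
  rcases Nat.even_or_odd m with hm | hm
  · refine ⟨0, by simp [hm.neg_one_pow], by simp, by simpa [parity_simps] using hm⟩
  · have hs1 : |(s : ℤ)| = 1 := by cases s <;> simp_all
    refine ⟨s, by simp [hm.neg_one_pow]; ring, by rw [hs1]; exact_mod_cast hm.pos, ?_⟩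
    exact (hm.natCast (R := ℤ)).sub_odd (odd_abs.1 (hs1 ▸ odd_one))

theorem exists_parityBound_of_zeros_of_simple_poles {f : ℝ → ℝ} {a b : ℝ} (hab : a ≤ b)
    (Z P : Finset ℝ) (hZP : Disjoint Z P) (hZ : ∀ z ∈ Z, z ∈ Set.Ioo a b)
    (hP : ∀ t ∈ P, t ∈ Set.Ioo a b) (hf : ContinuousOn f (Set.Icc a b \ P))
    (hf0 : ∀ x ∈ Set.Icc a b \ P, f x = 0 → x ∈ Z) (m : ℝ → ℕ)
    (hm : ∀ z ∈ Z, ∃ g : ℝ → ℝ, ContinuousAt g z ∧ g z ≠ 0 ∧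
      f =ᶠ[𝓝 z] fun y => (y - z) ^ m z * g y)
    (res : ℝ → ℝ) (hres : ∀ t ∈ P, res t ≠ 0 ∧
      Tendsto (fun x => (x - t) * f x) (𝓝[≠] t) (𝓝 (res t))) :
    ∃ J : ℤ, ParityBound J (∑ z ∈ Z, m z) ∧
      (SignType.sign (f b) : ℤ) - SignType.sign (f a) =
        2 * (J + ∑ t ∈ P, (SignType.sign (res t) : ℤ)) := by
  classical
  choose! g hg using hm
  have hgz : ∀ z ∈ Z, SignType.sign (g z z) ≠ 0 := fun z hz => sign_ne_zero.2 (hg z hz).2.1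
  choose! j hj using fun z hz => exists_parityBound_of_sign_sub_neg_one_pow_mul _ (hgz z hz) (m z)
  have hPZ : ∀ t ∈ P, t ∉ Z := fun t ht htZ => disjoint_left.1 hZP htZ ht
  have hjump := sign_sub_sign_eq_sum_jumps (f := f) (Z ∪ P) hab
    (sl := fun t => if t ∈ Z then (-1) ^ m t * SignType.sign (g t t) else -SignType.sign (res t))
    (sr := fun t => if t ∈ Z then SignType.sign (g t t) else SignType.sign (res t))
    (fun t ht => (mem_union.1 ht).elim (hZ t) (hP t))
    (hf.mono (Set.sdiff_subset_sdiff_right (by simp)))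
    (fun x hx h0 => hx.2 (by simp [hf0 x ⟨hx.1, fun h => hx.2 (by simp [h])⟩ h0]))
    (fun t ht => by
      rcases mem_union.1 ht with htZ | htP
      · simpa [htZ] using eventually_nhdsLT_sign_eq_of_eventuallyEq_pow_mul (hg t htZ).2.2
          (hg t htZ).1 (hg t htZ).2.1
      · simpa [hPZ t htP] using eventually_nhdsLT_sign_eq_of_tendsto_sub_mul (hres t htP).2
          (hres t htP).1)
    (fun t ht => by
      rcases mem_union.1 ht with htZ | htP
      · simpa [htZ] using eventually_nhdsGT_sign_eq_of_eventuallyEq_pow_mul (hg t htZ).2.2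
          (hg t htZ).1 (hg t htZ).2.1
      · simpa [hPZ t htP] using eventually_nhdsGT_sign_eq_of_tendsto_sub_mul (hres t htP).2
          (hres t htP).1)
  refine ⟨∑ z ∈ Z, j z, ParityBound.sum fun z hz => (hj z hz).2, ?_⟩
  rw [hjump, sum_union hZP, mul_add, mul_sum, mul_sum]
  congr 1
  · exact sum_congr rfl fun z hz => by simpa [hz] using (hj z hz).1
  · exact sum_congr rfl fun t ht => by simp [hPZ t ht]; ring

theorem exists_sign_sub_sign_eq_two_mul {x y : ℝ} (hx : x ≠ 0) (hy : y ≠ 0) :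
    ∃ e : ℤ, (SignType.sign y : ℤ) - SignType.sign x = 2 * e ∧
      |e| = if x * y < 0 then 1 else 0 := by
  rcases hx.lt_or_gt with hx | hx <;> rcases hy.lt_or_gt with hy | hy
  · exact ⟨0, by simp [sign_neg hx, sign_neg hy], by simp [(mul_pos_of_neg_of_neg hx hy).not_gt]⟩
  · exact ⟨1, by simp [sign_neg hx, sign_pos hy], by simp [mul_neg_of_neg_of_pos hx hy]⟩
  · exact ⟨-1, by simp [sign_pos hx, sign_neg hy], by simp [mul_neg_of_pos_of_neg hx hy]⟩
  · exact ⟨0, by simp [sign_pos hx, sign_pos hy], by simp [(mul_pos hx hy).not_gt]⟩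

theorem Finset.sum_sign_eq_card_filter_pos_sub_card_filter_neg {ι : Type*} (s : Finset ι)
    (f : ι → ℝ) :
    ∑ i ∈ s, (SignType.sign (f i) : ℤ) = #{i ∈ s | 0 < f i} - #{i ∈ s | f i < 0} := by
  classical
  simp only [natCast_card_filter, ← sum_sub_distrib]
  refine sum_congr rfl fun i _ => ?_
  rcases lt_trichotomy (f i) 0 with h | h | h
  · simp [h, h.not_gt]
  · simp [h]
  · simp [h, h.not_gt]

theorem zeros_with_multiplicity_from_poles_general
    (a b : ℝ) (hab : a < b) (n : ℕ) (p : Fin n → ℝ) (hmono : StrictMono p)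
    (hmem : ∀ i, p i ∈ Set.Ioo a b)
    (φ : ℝ → ℝ)
    (han : AnalyticOnNhd ℝ φ (Set.Icc a b \ Set.range p))
    (r : Fin n → ℝ) (hr : ∀ i, r i ≠ 0)
    (hres : ∀ i, Filter.Tendsto (fun x => (x - p i) * φ x) (𝓝[≠] (p i)) (𝓝 (r i)))
    (ha : φ a ≠ 0) (hb : φ b ≠ 0)
    (Z : Finset ℝ)
    (hZ : (↑Z : Set ℝ) = {x ∈ Set.Icc a b \ Set.range p | φ x = 0})
    (mult : ℝ → ℕ)
    (hmult : ∀ x ∈ Z, ∃ g : ℝ → ℝ, AnalyticAt ℝ g x ∧ g x ≠ 0 ∧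
      ∀ᶠ y in 𝓝 x, φ y = (y - x) ^ (mult x) * g y)
    (N : ℕ) (hN : N = ∑ x ∈ Z, mult x)
    (c : ℤ) (hc : c = if φ a * φ b < 0 then 1 else 0) :
    ((((Finset.univ.filter fun i => 0 < r i).card : ℤ)
        - ((Finset.univ.filter fun i => r i < 0).card : ℤ)).natAbs - c : ℤ) ≤ N ∧
    Even ((N : ℤ) -
      (((((Finset.univ.filter fun i => 0 < r i).card : ℤ)
        - ((Finset.univ.filter fun i => r i < 0).card : ℤ)).natAbs : ℤ) - c)) := by
  classical
  have hZmem (x : ℝ) : x ∈ Z ↔ x ∈ Set.Icc a b \ Set.range p ∧ φ x = 0 := by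
    rw [← Finset.mem_coe, hZ]; rfl
  have hP : (↑(univ.image p) : Set ℝ) = Set.range p := by simp
  obtain ⟨J, hJ, hsign⟩ := exists_parityBound_of_zeros_of_simple_poles hab.le Z (univ.image p)
    (disjoint_left.2 fun x hx hxP => ((hZmem x).1 hx).1.2 (hP ▸ hxP))
    (fun z hz => by
      obtain ⟨⟨⟨haz, hzb⟩, -⟩, hz0⟩ := (hZmem z).1 hz
      exact ⟨haz.lt_of_ne (by rintro rfl; exact ha hz0),
        hzb.lt_of_ne (by rintro rfl; exact hb hz0)⟩)
    (by simpa using hmem) (hP ▸ han.continuousOn) (fun x hx h0 => (hZmem x).2 ⟨hP ▸ hx, h0⟩)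
    mult (fun z hz => let ⟨g, hg, hgz, hfg⟩ := hmult z hz; ⟨g, hg.continuousAt, hgz, hfg⟩)
    (Function.extend p r 0) (by simpa [hmono.injective.extend_apply] using fun i => ⟨hr i, hres i⟩)
  rw [sum_image hmono.injective.injOn] at hsign
  simp only [hmono.injective.extend_apply, sum_sign_eq_card_filter_pos_sub_card_filter_neg] at hsign
  obtain ⟨e, he, hec⟩ := exists_sign_sub_sign_eq_two_mul ha hb
  have hbound := hJ.abs_sub_abs e
  rw [← hc] at hec
  rw [← Nat.cast_sum, ← hN] at hbound
  generalize hS : ((#{i | 0 < r i} : ℤ) - #{i | r i < 0}) = S at hsign ⊢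
  rw [Int.natCast_natAbs, show S = e - J by linarith, ← hec]
  exact ⟨(le_abs_self _).trans hbound.1, hbound.2⟩

/-- Zero count (with multiplicities) for a real-analytic function on `[a,b]` with simple poles
`p_1 < ⋯ < p_n` in `(a,b)`: with `n₊` (resp. `n₋`) the number of poles with positive (resp.
negative) residue, and `c = 1` if `φ(a)φ(b) < 0` and `c = 0` otherwise, the number `N` of zeros
of `φ` in `[a,b]` counted with multiplicity satisfies `N ≥ |n₊ - n₋| - c` and
`N - (|n₊ - n₋| - c)` is even. -/
theorem zeros_with_multiplicity_from_poles
    (a b : ℝ) (hab : a < b) (n : ℕ) (p : Fin n → ℝ) (hmono : StrictMono p)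
    (hmem : ∀ i, p i ∈ Set.Ioo a b)
    (φ : ℝ → ℝ)
    (han : AnalyticOnNhd ℝ φ (Set.Icc a b \ Set.range p))
    (hnz : ∀ x ∈ Set.Icc a b \ Set.range p,
      ¬ ∀ y ∈ connectedComponentIn (Set.Icc a b \ Set.range p) x, φ y = 0)
    (r : Fin n → ℝ) (hr : ∀ i, r i ≠ 0)
    (hres : ∀ i, Filter.Tendsto (fun x => (x - p i) * φ x) (𝓝[≠] (p i)) (𝓝 (r i)))
    (ha : φ a ≠ 0) (hb : φ b ≠ 0)
    (Z : Finset ℝ)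
    (hZ : (↑Z : Set ℝ) = {x ∈ Set.Icc a b \ Set.range p | φ x = 0})
    (mult : ℝ → ℕ)
    (hmult : ∀ x ∈ Z, ∃ g : ℝ → ℝ, AnalyticAt ℝ g x ∧ g x ≠ 0 ∧
      ∀ᶠ y in 𝓝 x, φ y = (y - x) ^ (mult x) * g y)
    (N : ℕ) (hN : N = ∑ x ∈ Z, mult x)
    (c : ℤ) (hc : c = if φ a * φ b < 0 then 1 else 0) :
    ((((Finset.univ.filter fun i => 0 < r i).card : ℤ)
        - ((Finset.univ.filter fun i => r i < 0).card : ℤ)).natAbs - c : ℤ) ≤ N ∧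
    Even ((N : ℤ) -
      (((((Finset.univ.filter fun i => 0 < r i).card : ℤ)
        - ((Finset.univ.filter fun i => r i < 0).card : ℤ)).natAbs : ℤ) - c)) :=
  zeros_with_multiplicity_from_poles_general a b hab n p hmono hmem φ han r hr hres ha hb Z hZ mult
    hmult N hN c hc
end

section
/- Let m ≥ 4 be an integer and let x ∈ (0, π/2) be a real number with cos((m−2)x) = 0. Then cos((m−4)x)·sin((m−2)x) > 0; equivalently, the residue −cos((m−4)x)/((m−2)·sin((m−2)x)) of the function cos((m−4)x)/cos((m−2)x) at its pole x is negative. -/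
open Real

/-- The residues of `cos((m-4)x)/cos((m-2)x)` at its poles in `(0, π/2)` are negative. -/
theorem residue_D_neg (m : ℕ) (hm : 4 ≤ m) (x : ℝ) (hx : x ∈ Set.Ioo 0 (π / 2))
    (hpole : Real.cos ((m - 2 : ℝ) * x) = 0) :
    Real.cos ((m - 4 : ℝ) * x) * Real.sin ((m - 2 : ℝ) * x) > 0 ∧
    -Real.cos ((m - 4 : ℝ) * x) / ((m - 2 : ℝ) * Real.sin ((m - 2 : ℝ) * x)) < 0 := by
  obtain ⟨hx0, hx2⟩ := hx
  set A := (m - 2 : ℝ) * x with hA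
  have hsin2x : Real.sin (2 * x) > 0 := by
    apply Real.sin_pos_of_pos_of_lt_pi (by linarith)
    linarith [Real.pi_pos]
  have hsA : Real.sin A ≠ 0 := by
    intro h
    have := Real.sin_sq_add_cos_sq A
    rw [h, hpole] at this; norm_num at this
  have hkey : Real.cos ((m - 4 : ℝ) * x) = Real.sin A * Real.sin (2 * x) := by
    have : (m - 4 : ℝ) * x = A - 2 * x := by rw [hA]; ring
    rw [this, Real.cos_sub, hpole]; ring
  have hsq : 0 < Real.sin A * Real.sin A :=
    hsA.lt_or_gt.elim (fun h => mul_pos_of_neg_of_neg h h) (fun h => mul_pos h h)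
  have h1 : Real.cos ((m - 4 : ℝ) * x) * Real.sin A > 0 := by
    rw [hkey]
    nlinarith
  refine ⟨h1, ?_⟩
  have hm2 : (0 : ℝ) < (m : ℝ) - 2 := by
    have : (4 : ℝ) ≤ m := by exact_mod_cast hm
    linarith
  have heq : -Real.cos ((m - 4 : ℝ) * x) / ((m - 2 : ℝ) * Real.sin A)
      = -(Real.cos ((m - 4 : ℝ) * x) * Real.sin A) / (((m : ℝ) - 2) * (Real.sin A * Real.sin A)) := by
    field_simp
  rw [heq]
  apply div_neg_of_neg_of_pos (by linarith)
  exact mul_pos hm2 hsq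
end

section
/- Let d(t), e(t), p(t), q(t) be the polynomials determined by (1 − t²)·d(t) = (1 + t^{15})(1 − t^{17}), (1 − t²)·e(t) = (1 + t^{13})(1 − t^{17}), (1 − t²)·p(t) = (1 + t³)(1 − t⁷), and (1 − t²)·q(t) = (1 + t³)(1 + t)(1 − t⁴). Then the polynomial F(t) = e(t)·p(t) + d(t)·q(t) is not unimodular: F has a complex root t₀ with |t₀| ≠ 1 (in fact exactly four roots, counted with multiplicity, not lying on the unit circle). -/
/-!
Clearing the denominator `(1 - t²)²` gives `F = A * G`, where the roots of
`A = (t² - t + 1)(1 + t + ⋯ + t¹⁶)` are roots of unity and `G` is palindromic of degree 18: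
`G(z) = z⁹ H(z + z⁻¹)` for a real polynomial `H` of degree 9. So the roots of `G` are the roots
of the quadratics `z² - βz + 1`, `β` a root of `H`, and such a root lies on the unit circle iff
`β` is a real number in `[-2, 2]`. Sign changes of `H` give seven roots in `(-2, 2]`. The other
two are non-real: if all roots of `H` were real, `|H(x + iy)| ≥ |H(x)|` would hold for all real
`x, y`, but it fails at `x = -11/6`, `y = 1/32`, close to the non-real root `≈ -1.832 + 0.031i`.
Each of these two contributes two roots of `G` off the unit circle.
-/

open Polynomial Complex ComplexConjugate

namespace Polynomial

theorem eq_C_leadingCoeff_mul_prod_of_eval_eq_pow_mul_eval_add_inv {K : Type*} [Field K]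
    [IsAlgClosed K] {P Q : K[X]}
    (hQ : ∀ z ≠ 0, Q.eval z = z ^ P.natDegree * P.eval (z + z⁻¹)) :
    Q = C P.leadingCoeff * (P.roots.map fun β => X ^ 2 - C β * X + 1).prod := by
  refine eq_of_infinite_eval_eq _ _
    ((Set.finite_singleton 0).infinite_compl.mono fun z (hz : z ≠ 0) => ?_)
  have hquad (β : K) : z ^ 2 - β * z + 1 = z * (z + z⁻¹ - β) := by field_simp; ring
  change Q.eval z = _
  rw [hQ z hz, (IsAlgClosed.splits P).eval_eq_prod_roots, eval_mul, eval_C, eval_multiset_prod,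
    Multiset.map_map]
  simp only [Function.comp_def, eval_add, eval_sub, eval_mul, eval_C, eval_pow, eval_X, eval_one,
    hquad, Multiset.prod_map_mul, Multiset.map_const', Multiset.prod_replicate,
    IsAlgClosed.card_roots_eq_natDegree]
  ring

theorem monic_X_sq_sub_C_mul_X_add_one {R : Type*} [CommRing R] [Nontrivial R] (β : R) :
    (X ^ 2 - C β * X + 1 : R[X]).Monic := by
  monicity!

theorem card_roots_X_sq_sub_C_mul_X_add_one {K : Type*} [Field K] [IsAlgClosed K] (β : K) :
    (X ^ 2 - C β * X + 1 : K[X]).roots.card = 2 := by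
  rw [IsAlgClosed.card_roots_eq_natDegree]
  compute_degree!

end Polynomial

theorem Complex.norm_eq_one_iff_mem_image_Icc_of_sq_sub_mul_add_one {z β : ℂ}
    (h : z ^ 2 - β * z + 1 = 0) : ‖z‖ = 1 ↔ β ∈ ofReal '' Set.Icc (-2) 2 := by
  constructor
  · intro hz
    have hz0 : z ≠ 0 := by rintro rfl; simp at h
    have hβ : β = z + conj z := by
      refine mul_right_cancel₀ hz0 ?_
      rw [add_mul, mul_comm (conj z), mul_conj', hz, ofReal_one, one_pow]
      linear_combination -h
    refine ⟨2 * z.re, ?_, by rw [hβ, add_conj]⟩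
    have := abs_le.mp (hz ▸ abs_re_le_norm z)
    constructor <;> linarith
  · rintro ⟨r, ⟨hr₁, hr₂⟩, rfl⟩
    have hre := congrArg re h
    have him := congrArg im h
    simp only [sub_re, add_re, mul_re, sub_im, add_im, mul_im, ofReal_re, ofReal_im, one_re,
      one_im, zero_re, zero_im, pow_two] at hre him
    rw [← pow_eq_one_iff_of_nonneg (norm_nonneg z) two_ne_zero, Complex.sq_norm, normSq_apply]
    rcases mul_eq_zero.mp (show z.im * (2 * z.re - r) = 0 by linarith) with hy | hx
    · rw [hy] at hre ⊢
      have hdisc : (2 * z.re - r) ^ 2 = r ^ 2 - 4 := by linear_combination 4 * hre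
      have hx : 2 * z.re - r = 0 := by nlinarith [sq_nonneg (2 * z.re - r)]
      nlinarith
    · nlinarith

namespace Polynomial

open scoped Classical in
theorem card_filter_norm_ne_one_roots_X_sq_sub_C_mul_X_add_one (β : ℂ) :
    ((X ^ 2 - C β * X + 1 : ℂ[X]).roots.filter (‖·‖ ≠ 1)).card =
      if β ∈ ofReal '' Set.Icc (-2) 2 then 0 else 2 := by
  have hmem {z : ℂ} : z ∈ (X ^ 2 - C β * X + 1 : ℂ[X]).roots ↔ z ^ 2 - β * z + 1 = 0 := by
    simp [mem_roots (monic_X_sq_sub_C_mul_X_add_one β).ne_zero]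
  split_ifs with hβ
  · refine Multiset.card_eq_zero.mpr <| Multiset.filter_eq_nil.mpr fun z hz => not_not.mpr ?_
    exact (norm_eq_one_iff_mem_image_Icc_of_sq_sub_mul_add_one (hmem.mp hz)).mpr hβ
  · rw [Multiset.filter_eq_self.mpr, card_roots_X_sq_sub_C_mul_X_add_one]
    exact fun z hz hz1 =>
      hβ ((norm_eq_one_iff_mem_image_Icc_of_sq_sub_mul_add_one (hmem.mp hz)).mp hz1)

open scoped Classical in
theorem card_filter_norm_ne_one_roots_multiset_prod_X_sq_sub_C_mul_X_add_one (s : Multiset ℂ) :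
    ((s.map fun β => X ^ 2 - C β * X + 1).prod.roots.filter (‖·‖ ≠ 1)).card =
      2 * (s.filter (· ∉ ofReal '' Set.Icc (-2) 2)).card := by
  induction s using Multiset.induction_on with
  | empty => simp
  | cons β s ih =>
    have hprod : (X ^ 2 - C β * X + 1) * (s.map fun β => X ^ 2 - C β * X + 1).prod ≠ 0 :=
      (monic_X_sq_sub_C_mul_X_add_one β).mul (monic_multiset_prod_of_monic _ _ fun γ _ =>
        monic_X_sq_sub_C_mul_X_add_one γ) |>.ne_zero
    rw [Multiset.map_cons, Multiset.prod_cons, roots_mul hprod, Multiset.filter_add,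
      Multiset.card_add, ih, card_filter_norm_ne_one_roots_X_sq_sub_C_mul_X_add_one,
      Multiset.filter_cons]
    split_ifs <;> simp_all [mul_add, add_comm]

theorem exists_mem_Ioc_isRoot_of_eval_mul_eval_neg {p : ℝ[X]} {a b : ℝ}
    (hab : a ≤ b) (hsign : p.eval a * p.eval b < 0) : ∃ r ∈ Set.Ioc a b, p.IsRoot r := by
  have h0 : (0 : ℝ) ∈ Set.uIcc (p.eval a) (p.eval b) := by
    rcases mul_neg_iff.mp hsign with h | h
    · exact Set.mem_uIcc.mpr (Or.inr ⟨h.2.le, h.1.le⟩)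
    · exact Set.mem_uIcc.mpr (Or.inl ⟨h.1.le, h.2.le⟩)
  obtain ⟨r, hr, hr0⟩ := intermediate_value_uIcc p.continuous.continuousOn h0
  rw [Set.uIcc_of_le hab] at hr
  refine ⟨r, ⟨lt_of_le_of_ne hr.1 ?_, hr.2⟩, hr0⟩
  rintro rfl
  simp [hr0] at hsign

open scoped Classical in
theorem length_le_card_filter_roots_Ioc_of_isChain {p : ℝ[X]} {a c : ℝ} {l : List ℝ}
    (hl : (a :: l).IsChain fun x y => x < y ∧ p.eval x * p.eval y < 0) (hc : ∀ x ∈ l, x ≤ c) :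
    l.length ≤ (p.roots.filter (· ∈ Set.Ioc a c)).card := by
  induction l generalizing a with
  | nil => simp
  | cons b l ih =>
    obtain ⟨⟨hab, hsign⟩, hl⟩ := List.isChain_cons_cons.mp hl
    have hbc : b ≤ c := hc b List.mem_cons_self
    obtain ⟨r, hr, hroot⟩ := exists_mem_Ioc_isRoot_of_eval_mul_eval_neg hab.le hsign
    have hp : p ≠ 0 := by rintro rfl; simp at hsign
    have hsplit : p.roots.filter (· ∈ Set.Ioc a b) + p.roots.filter (· ∈ Set.Ioc b c) =
        p.roots.filter (· ∈ Set.Ioc a c) := by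
      have hdisj : p.roots.filter (fun x => x ∈ Set.Ioc a b ∧ x ∈ Set.Ioc b c) = 0 :=
        Multiset.filter_eq_nil.mpr fun x _ hx => not_lt.mpr hx.1.2 hx.2.1
      rw [Multiset.filter_add_filter, hdisj, add_zero]
      refine Multiset.filter_congr fun x _ => ?_
      rw [← Set.mem_union, Set.Ioc_union_Ioc_eq_Ioc hab.le hbc]
    have hr : 0 < (p.roots.filter (· ∈ Set.Ioc a b)).card :=
      Multiset.card_pos_iff_exists_mem.mpr
        ⟨r, Multiset.mem_filter.mpr ⟨(mem_roots hp).mpr hroot, hr⟩⟩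
    have := ih hl fun x hx => hc x (List.mem_cons_of_mem b hx)
    rw [← hsplit, Multiset.card_add, List.length_cons]
    omega

theorem norm_eval_ofReal_le_norm_eval_of_forall_im_eq_zero {P : ℂ[X]}
    (hP : ∀ β ∈ P.roots, β.im = 0) (x y : ℝ) : ‖P.eval (x : ℂ)‖ ≤ ‖P.eval (x + y * I)‖ := by
  have hfac (w : ℂ) : ‖P.eval w‖ = ‖P.leadingCoeff‖ * (P.roots.map fun β => ‖w - β‖).prod := by
    rw [(IsAlgClosed.splits P).eval_eq_prod_roots, norm_mul,
      ← normHom_apply (α := ℂ) (Multiset.prod _), map_multiset_prod, Multiset.map_map]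
    rfl
  rw [hfac, hfac]
  gcongr
  refine Multiset.prod_map_le_prod_map₀ _ _ (fun _ _ => norm_nonneg _) fun β hβ => ?_
  calc ‖(x : ℂ) - β‖ = |x - β.re| := by
        rw [← Real.norm_eq_abs, ← norm_real, ofReal_sub, ← re_add_im β, hP β hβ]; simp
    _ ≤ ‖(x : ℂ) + y * I - β‖ := by
        simpa using abs_re_le_norm ((x : ℂ) + y * I - β)

end Polynomial

namespace D17E7

noncomputable def A : ℂ[X] := (X ^ 2 - X + 1) * ∑ i ∈ Finset.range 17, X ^ i

noncomputable def G : ℂ[X] :=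
  2 * X ^ 18 + X ^ 17 + 2 * X ^ 16 + X ^ 15 + X ^ 14 + X ^ 12 - X ^ 11 + X ^ 10 - X ^ 9
    + X ^ 8 - X ^ 7 + X ^ 6 + X ^ 4 + X ^ 3 + 2 * X ^ 2 + X + 2

noncomputable def H : ℝ[X] :=
  2 * X ^ 9 + X ^ 8 - 16 * X ^ 7 - 7 * X ^ 6 + 41 * X ^ 5 + 14 * X ^ 4 - 36 * X ^ 3
    - 8 * X ^ 2 + 7 * X + 1

theorem A_norm_eq_one_of_mem_roots {z : ℂ} (hz : z ∈ A.roots) : ‖z‖ = 1 := by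
  have hA : A ≠ 0 := by rintro h; simp [h] at hz
  have h := (mem_roots hA).mp hz
  simp only [A, IsRoot, eval_mul, eval_add, eval_sub, eval_pow, eval_X, eval_one,
    eval_finsetSum] at h
  rcases mul_eq_zero.mp h with h | h
  · exact norm_eq_one_of_pow_eq_one (n := 6) (by linear_combination (z ^ 4 + z ^ 3 - z - 1) * h)
      (by norm_num)
  · exact norm_eq_one_of_pow_eq_one (n := 17)
      (by linear_combination (z - 1) * h - geom_sum_mul z 17) (by norm_num)

theorem H_natDegree : H.natDegree = 9 := by
  unfold H; compute_degree!

theorem H_leadingCoeff : H.leadingCoeff = 2 := by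
  rw [leadingCoeff, H_natDegree]; simp [H, coeff_X, coeff_one]

theorem H_ne_zero : H ≠ 0 := by
  intro h; simpa [h] using H_natDegree

theorem G_eval {z : ℂ} (hz : z ≠ 0) : G.eval z = z ^ 9 * aeval (z + z⁻¹) H := by
  simp only [G, H, eval_add, eval_sub, eval_mul, eval_pow, eval_X, eval_ofNat, map_add,
    map_sub, map_mul, map_pow, aeval_X, map_ofNat, map_one]
  field_simp
  ring

theorem G_eq_C_mul_prod : G = C 2 * ((H.aroots ℂ).map fun β => X ^ 2 - C β * X + 1).prod := by
  have hdeg : (H.map (algebraMap ℝ ℂ)).natDegree = 9 := by rw [natDegree_map, H_natDegree]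
  have := eq_C_leadingCoeff_mul_prod_of_eval_eq_pow_mul_eval_add_inv
    (P := H.map (algebraMap ℝ ℂ)) (Q := G) fun z hz => by
      rw [hdeg, eval_map_algebraMap, G_eval hz]
  rwa [leadingCoeff_map, H_leadingCoeff, map_ofNat] at this

open scoped Classical in
theorem H_seven_le_card_filter_aroots :
    7 ≤ ((H.aroots ℂ).filter (· ∈ ofReal '' Set.Icc (-2) 2)).card := by
  have hreal : 7 ≤ (H.roots.filter (· ∈ Set.Ioc (-2) 2)).card := by
    refine length_le_card_filter_roots_Ioc_of_isChain
      (l := [-1, -1/2, 0, 1/2, 3/2, 17/10, 49/25]) ?_ (by norm_num)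
    simp only [List.isChain_cons_cons, List.IsChain.singleton, and_true]
    norm_num [H]
  refine hreal.trans (le_of_eq_of_le (Multiset.card_map ofReal _).symm
    (Multiset.card_le_card (Multiset.le_filter.mpr ⟨?_, ?_⟩)))
  · exact (Multiset.map_le_map (Multiset.filter_le _ _)).trans
      (map_roots_le_of_injective _ (algebraMap ℝ ℂ).injective)
  · intro z hz
    obtain ⟨r, hr, rfl⟩ := Multiset.mem_map.mp hz
    exact ⟨r, Set.Ioc_subset_Icc_self (Multiset.mem_filter.mp hr).2, rfl⟩

theorem H_exists_aroots_im_ne_zero : ∃ β ∈ H.aroots ℂ, β.im ≠ 0 := by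
  by_contra! hreal
  have hle := norm_eval_ofReal_le_norm_eval_of_forall_im_eq_zero
    (P := H.map (algebraMap ℝ ℂ)) hreal (-11 / 6) (1 / 32)
  rw [eval_map_algebraMap, eval_map_algebraMap] at hle
  refine hle.not_gt ?_
  rw [← sq_lt_sq₀ (norm_nonneg _) (norm_nonneg _), Complex.sq_norm, Complex.sq_norm,
    normSq_apply, normSq_apply]
  norm_num [H, pow_succ, map_ofNat]

open scoped Classical in
theorem H_card_filter_aroots_not_mem :
    ((H.aroots ℂ).filter (· ∉ ofReal '' Set.Icc (-2) 2)).card = 2 := by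
  have him_eq_zero {β : ℂ} (hβ : β ∈ ofReal '' Set.Icc (-2) 2) : β.im = 0 := by
    obtain ⟨r, -, rfl⟩ := hβ; exact ofReal_im r
  apply le_antisymm
  · have hsplit := congrArg Multiset.card
      (Multiset.filter_add_not (· ∈ ofReal '' Set.Icc (-2) 2) (H.aroots ℂ))
    rw [Multiset.card_add, IsAlgClosed.card_aroots_eq_natDegree, H_natDegree] at hsplit
    have := H_seven_le_card_filter_aroots
    omega
  · obtain ⟨β, hβ, him⟩ := H_exists_aroots_im_ne_zero
    have hpair : {conj β, β} ≤ H.aroots ℂ := by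
      have hdvd := H.mul_star_dvd_of_aeval_eq_zero_im_ne_zero (mem_aroots.mp hβ).2 him
      have := roots.le_of_dvd (map_ne_zero H_ne_zero) hdvd
      rwa [roots_mul (mul_ne_zero (X_sub_C_ne_zero _) (X_sub_C_ne_zero _)), roots_X_sub_C,
        roots_X_sub_C] at this
    have hle : {conj β, β} ≤ (H.aroots ℂ).filter (· ∉ ofReal '' Set.Icc (-2) 2) := by
      refine Multiset.le_filter.mpr ⟨hpair, fun z hz hzT => him ?_⟩
      rcases Multiset.mem_cons.mp hz with rfl | hz
      · simpa using him_eq_zero hzT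
      · exact Multiset.mem_singleton.mp hz ▸ him_eq_zero hzT
    simpa using Multiset.card_le_card hle

open scoped Classical in
theorem G_card_filter_norm_ne_one_roots : (G.roots.filter (‖·‖ ≠ 1)).card = 4 := by
  rw [G_eq_C_mul_prod, roots_C_mul _ two_ne_zero,
    card_filter_norm_ne_one_roots_multiset_prod_X_sq_sub_C_mul_X_add_one,
    H_card_filter_aroots_not_mem]

end D17E7

open scoped Classical in
/-- The Poincaré polynomial of the Lie algebra of derivations of the moduli algebra of the
semisimple singularity `D₁₇ ⊕ E₇` is not unimodular: it has a root off the unit circle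
(in fact exactly four, counted with multiplicity). This is a counterexample to
Theorem 4.5 of Elashvili–Khimshiashvili. -/
theorem D17_E7_not_unimodular
    (d e p q : Polynomial ℂ)
    (hd : (1 - Polynomial.X ^ 2) * d = (1 + Polynomial.X ^ 15) * (1 - Polynomial.X ^ 17))
    (he : (1 - Polynomial.X ^ 2) * e = (1 + Polynomial.X ^ 13) * (1 - Polynomial.X ^ 17))
    (hp : (1 - Polynomial.X ^ 2) * p = (1 + Polynomial.X ^ 3) * (1 - Polynomial.X ^ 7))
    (hq : (1 - Polynomial.X ^ 2) * q
        = (1 + Polynomial.X ^ 3) * (1 + Polynomial.X) * (1 - Polynomial.X ^ 4))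
    (F : Polynomial ℂ) (hF : F = e * p + d * q) :
    (∃ t₀ : ℂ, F.IsRoot t₀ ∧ ‖t₀‖ ≠ 1) ∧
    (F.roots.filter (fun z => ‖z‖ ≠ 1)).card = 4 := by
  have hAG : F = D17E7.A * D17E7.G := by
    have h : (1 - X ^ 2 : ℂ[X]) ^ 2 ≠ 0 :=
      pow_ne_zero 2 fun h => by simpa using congrArg (eval 0) h
    refine mul_left_cancel₀ h ?_
    simp only [hF, D17E7.A, D17E7.G, Finset.sum_range_succ, Finset.sum_range_zero]
    linear_combination ((1 - X ^ 2) * p) * he + (1 + X ^ 13) * (1 - X ^ 17) * hp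
      + ((1 - X ^ 2) * q) * hd + (1 + X ^ 15) * (1 - X ^ 17) * hq
  have hF0 : F ≠ 0 := fun h => by
    simpa [hAG, D17E7.A, D17E7.G, eval_finsetSum] using congrArg (eval 0) h
  have hcard : (F.roots.filter (fun z => ‖z‖ ≠ 1)).card = 4 := by
    rw [hAG, roots_mul (hAG ▸ hF0), Multiset.filter_add, Multiset.card_add,
      D17E7.G_card_filter_norm_ne_one_roots, Multiset.filter_eq_nil.mpr fun z hz =>
        not_not.mpr (D17E7.A_norm_eq_one_of_mem_roots hz)]
    rfl
  obtain ⟨t₀, ht₀⟩ := Multiset.card_pos_iff_exists_mem.mp (hcard ▸ four_pos)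
  obtain ⟨hroot, hnorm⟩ := Multiset.mem_filter.mp ht₀
  exact ⟨⟨t₀, (mem_roots hF0).mp hroot, hnorm⟩, hcard⟩
end

section
/- Let l ≥ 1, K, M ≥ 0 be integers with K + M ≥ 1, let k_1, …, k_K be integers with k_j ≥ 1 and m_1, …, m_M be integers with m_j ≥ 4, and assume that at least one k_j ≥ 2 or M ≥ 1. Define φ(x) = l·sin(4x)·cos(x)/sin(7x) + Σ_{j=1}^{K} sin((2k_j−2)x)/sin(2k_j x) + Σ_{j=1}^{M} cos((m_j−4)x)/cos((m_j−2)x). Then φ extends continuously to x = 0 and x = π/2 with limits lim_{x→0} φ(x) = 4l/7 + Σ_{j=1}^{K} (k_j − 1)/k_j + M > 0 and lim_{x→π/2} φ(x) = −Σ_{j=1}^{K} (k_j − 1)/k_j + Σ_{j=1}^{M} c_j < 0, where c_j = −1 if m_j is even and c_j = −(m_j − 4)/(m_j − 2) if m_j is odd. In particular φ has limits of opposite signs at the endpoints 0 and π/2. -/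
open Real Filter Topology

lemma tendsto_div_of_hasDerivAt {g h : ℝ → ℝ} {x0 a b : ℝ}
    (hg : HasDerivAt g a x0) (hh : HasDerivAt h b x0)
    (hg0 : g x0 = 0) (hh0 : h x0 = 0) (hb : b ≠ 0) :
    Tendsto (fun x => g x / h x) (𝓝[≠] x0) (𝓝 (a / b)) := by
  have hgs := hasDerivAt_iff_tendsto_slope.mp hg
  have hhs := hasDerivAt_iff_tendsto_slope.mp hh
  refine (hgs.div hhs hb).congr' ?_
  filter_upwards [self_mem_nhdsWithin] with x hx
  have hx' : x - x0 ≠ 0 := sub_ne_zero.mpr hx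
  show slope g x0 x / slope h x0 x = g x / h x
  rw [slope_def_field, slope_def_field, hg0, hh0, sub_zero, sub_zero,
    div_div_div_comm, div_self hx', div_one]

lemma tendsto_div_of_continuous {g h : ℝ → ℝ} {x0 : ℝ}
    (hg : Continuous g) (hh : Continuous h) (hh0 : h x0 ≠ 0) :
    Tendsto (fun x => g x / h x) (𝓝[≠] x0) (𝓝 (g x0 / h x0)) :=
  (((hg.continuousAt).div hh.continuousAt hh0).tendsto).mono_left nhdsWithin_le_nhds

lemma hasDerivAt_sin_mul (c x0 : ℝ) :
    HasDerivAt (fun x => Real.sin (c * x)) (Real.cos (c * x0) * c) x0 := by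
  simpa using ((hasDerivAt_id x0).const_mul c).sin

lemma hasDerivAt_cos_mul (c x0 : ℝ) :
    HasDerivAt (fun x => Real.cos (c * x)) (-Real.sin (c * x0) * c) x0 := by
  simpa using ((hasDerivAt_id x0).const_mul c).cos

lemma cos_nat_pi_ne_zero (n : ℕ) : Real.cos ((n:ℝ) * π) ≠ 0 := by
  intro h
  have := Real.sin_sq_add_cos_sq ((n:ℝ) * π)
  rw [h, Real.sin_nat_mul_pi] at this
  norm_num at this

lemma A_zero {k : ℕ} (hk : 1 ≤ k) :
    Tendsto (fun x => Real.sin ((2*(k:ℝ)-2)*x) / Real.sin (2*(k:ℝ)*x)) (𝓝[≠] 0)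
      (𝓝 (((k:ℝ)-1)/(k:ℝ))) := by
  have hk' : (1:ℝ) ≤ (k:ℝ) := by exact_mod_cast hk
  have h := tendsto_div_of_hasDerivAt (hasDerivAt_sin_mul (2*(k:ℝ)-2) 0)
    (hasDerivAt_sin_mul (2*(k:ℝ)) 0) (by simp) (by simp)
    (by simp; positivity)
  convert h using 2
  simp only [mul_zero, Real.cos_zero, one_mul]
  rw [div_eq_div_iff (by positivity) (by positivity)]
  ring

lemma A_pi_div_two {k : ℕ} (hk : 1 ≤ k) :
    Tendsto (fun x => Real.sin ((2*(k:ℝ)-2)*x) / Real.sin (2*(k:ℝ)*x)) (𝓝[≠] (π/2))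
      (𝓝 (-(((k:ℝ)-1)/(k:ℝ)))) := by
  have hk' : (1:ℝ) ≤ (k:ℝ) := by exact_mod_cast hk
  have e1 : (2*(k:ℝ)-2)*(π/2) = (k:ℝ)*π - π := by ring
  have e2 : (2*(k:ℝ))*(π/2) = (k:ℝ)*π := by ring
  have hε := cos_nat_pi_ne_zero k
  have h := tendsto_div_of_hasDerivAt (hasDerivAt_sin_mul (2*(k:ℝ)-2) (π/2))
    (hasDerivAt_sin_mul (2*(k:ℝ)) (π/2))
    (by rw [e1, Real.sin_sub_pi, Real.sin_nat_mul_pi, neg_zero])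
    (by rw [e2, Real.sin_nat_mul_pi])
    (by rw [e2]; exact mul_ne_zero hε (by positivity))
  convert h using 2
  rw [e1, e2, Real.cos_sub_pi]
  have hk0 : (k:ℝ) ≠ 0 := by positivity
  field_simp

lemma D_zero (m : ℕ) :
    Tendsto (fun x => Real.cos (((m:ℝ)-4)*x) / Real.cos (((m:ℝ)-2)*x)) (𝓝[≠] 0)
      (𝓝 1) := by
  have cg : Continuous (fun x : ℝ => Real.cos (((m:ℝ)-4)*x)) := by fun_prop
  have ch : Continuous (fun x : ℝ => Real.cos (((m:ℝ)-2)*x)) := by fun_prop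
  have h := tendsto_div_of_continuous (x0 := 0) cg ch (by simp)
  simpa using h

lemma D_pi_div_two {m : ℕ} (hm : 4 ≤ m) :
    Tendsto (fun x => Real.cos (((m:ℝ)-4)*x) / Real.cos (((m:ℝ)-2)*x)) (𝓝[≠] (π/2))
      (𝓝 (if Even m then -1 else -(((m:ℝ)-4)/((m:ℝ)-2)))) := by
  rcases Nat.even_or_odd m with he | ho
  · obtain ⟨r, hr⟩ := he
    have hmr : (m:ℝ) = 2*(r:ℝ) := by rw [hr]; push_cast; ring
    have e2 : ((m:ℝ)-2)*(π/2) = (r:ℝ)*π - π := by rw [hmr]; ring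
    have e1 : ((m:ℝ)-4)*(π/2) = ((m:ℝ)-2)*(π/2) - π := by ring
    have hε : Real.cos (((m:ℝ)-2)*(π/2)) ≠ 0 := by
      rw [e2]
      intro h
      have := Real.sin_sq_add_cos_sq ((r:ℝ)*π - π)
      rw [h, Real.sin_sub_pi, Real.sin_nat_mul_pi] at this
      norm_num at this
    have cg : Continuous (fun x : ℝ => Real.cos (((m:ℝ)-4)*x)) := by fun_prop
    have ch : Continuous (fun x : ℝ => Real.cos (((m:ℝ)-2)*x)) := by fun_prop
    have h := tendsto_div_of_continuous (x0 := π/2) cg ch hε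
    have hif : (if Even m then (-1:ℝ) else -(((m:ℝ)-4)/((m:ℝ)-2))) = -1 := if_pos ⟨r, hr⟩
    rw [hif]
    convert h using 2
    show (-1 : ℝ) = Real.cos (((m:ℝ)-4)*(π/2)) / Real.cos (((m:ℝ)-2)*(π/2))
    rw [e1, Real.cos_sub_pi, neg_div, div_self hε]
  · obtain ⟨r, hr⟩ := ho
    have hmr : (m:ℝ) = 2*(r:ℝ)+1 := by rw [hr]; push_cast; ring
    have hm2 : ((m:ℝ)-2) ≠ 0 := by
      have : (4:ℝ) ≤ (m:ℝ) := by exact_mod_cast hm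
      linarith
    have e1 : ((m:ℝ)-4)*(π/2) = ((r:ℝ)*π - π) - π/2 := by rw [hmr]; ring
    have e2 : ((m:ℝ)-2)*(π/2) = (r:ℝ)*π - π/2 := by rw [hmr]; ring
    have hε := cos_nat_pi_ne_zero r
    have h := tendsto_div_of_hasDerivAt (hasDerivAt_cos_mul ((m:ℝ)-4) (π/2))
      (hasDerivAt_cos_mul ((m:ℝ)-2) (π/2))
      (by rw [e1, Real.cos_sub_pi_div_two, Real.sin_sub_pi, Real.sin_nat_mul_pi, neg_zero])
      (by rw [e2, Real.cos_sub_pi_div_two, Real.sin_nat_mul_pi])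
      (by
        rw [e2, Real.sin_sub_pi_div_two]
        exact mul_ne_zero (by simpa using hε) hm2)
    have hif : (if Even m then (-1:ℝ) else -(((m:ℝ)-4)/((m:ℝ)-2)))
        = -(((m:ℝ)-4)/((m:ℝ)-2)) := if_neg (Nat.not_even_iff_odd.mpr ⟨r, hr⟩)
    rw [hif]
    convert h using 2
    rw [e1, e2, Real.sin_sub_pi_div_two, Real.sin_sub_pi_div_two, Real.cos_sub_pi]
    field_simp

lemma E_zero (l : ℕ) :
    Tendsto (fun x => (l:ℝ) * (Real.sin (4*x) * Real.cos x / Real.sin (7*x))) (𝓝[≠] 0)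
      (𝓝 (4*(l:ℝ)/7)) := by
  have h1 := tendsto_div_of_hasDerivAt (hasDerivAt_sin_mul 4 0) (hasDerivAt_sin_mul 7 0)
    (by simp) (by simp) (by norm_num)
  simp only [mul_zero, Real.cos_zero, one_mul] at h1
  have h2 : Tendsto Real.cos (𝓝[≠] (0:ℝ)) (𝓝 1) := by
    simpa using (Real.continuous_cos.continuousAt (x := (0:ℝ))).tendsto.mono_left
      nhdsWithin_le_nhds
  have h : Tendsto (fun x => (l:ℝ) * ((Real.sin (4*x) / Real.sin (7*x)) * Real.cos x))
      (𝓝[≠] (0:ℝ)) (𝓝 ((l:ℝ) * ((4/7) * 1))) := tendsto_const_nhds.mul (h1.mul h2)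
  have e : (l:ℝ) * ((4/7) * 1) = 4*(l:ℝ)/7 := by ring
  exact e ▸ Filter.Tendsto.congr (fun x => by ring) h

lemma E_pi (l : ℕ) :
    Tendsto (fun x => (l:ℝ) * (Real.sin (4*x) * Real.cos x / Real.sin (7*x))) (𝓝[≠] (π/2))
      (𝓝 0) := by
  have hs7 : Real.sin (7*(π/2)) = -1 := by
    rw [show (7:ℝ)*(π/2) = π/2 + 2*π + π by ring, Real.sin_add_pi, Real.sin_add_two_pi,
      Real.sin_pi_div_two]
  have hs4 : Real.sin (4*(π/2)) = 0 := by
    rw [show (4:ℝ)*(π/2) = 2*π by ring, Real.sin_two_pi]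
  have hcont : ContinuousAt (fun x => (l:ℝ) * (Real.sin (4*x) * Real.cos x / Real.sin (7*x)))
      (π/2) := by
    apply ContinuousAt.mul continuousAt_const
    apply ContinuousAt.div (by fun_prop) (by fun_prop)
    rw [hs7]; norm_num
  have h : Tendsto (fun x => (l:ℝ) * (Real.sin (4*x) * Real.cos x / Real.sin (7*x)))
      (𝓝[≠] (π/2)) (𝓝 ((l:ℝ) * (Real.sin (4*(π/2)) * Real.cos (π/2) / Real.sin (7*(π/2))))) :=
    hcont.tendsto.mono_left nhdsWithin_le_nhds
  simpa [hs4] using h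

/-- The trigonometric rational function
`φ(x) = l·sin(4x)cos(x)/sin(7x) + Σ_j sin((2k_j-2)x)/sin(2k_j x) + Σ_j cos((m_j-4)x)/cos((m_j-2)x)`
arising from `S ⊕ E₇^{⊕l}` with `S` of type `A ⊕ D` extends continuously to the endpoints
`0` and `π/2`, with a positive limit `4l/7 + Σ_j (k_j-1)/k_j + M` at `0` and a negative limit
`-Σ_j (k_j-1)/k_j + Σ_j c_j` at `π/2`, where `c_j = -1` for even `m_j` and
`c_j = -(m_j-4)/(m_j-2)` for odd `m_j`. -/
theorem endpoint_limits_opposite_signs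
    (l : ℕ) (hl : 1 ≤ l)
    (K M : ℕ) (hKM : 1 ≤ K + M)
    (k : Fin K → ℕ) (hk : ∀ j, 1 ≤ k j)
    (m : Fin M → ℕ) (hm : ∀ j, 4 ≤ m j)
    (hnontriv : (∃ j, 2 ≤ k j) ∨ 1 ≤ M)
    (φ : ℝ → ℝ)
    (hφ : ∀ x, φ x =
        l * (Real.sin (4 * x) * Real.cos x / Real.sin (7 * x))
      + ∑ j, Real.sin ((2 * (k j : ℝ) - 2) * x) / Real.sin (2 * (k j : ℝ) * x)
      + ∑ j, Real.cos (((m j : ℝ) - 4) * x) / Real.cos (((m j : ℝ) - 2) * x))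
    (c : Fin M → ℝ)
    (hc : ∀ j, c j = if Even (m j) then -1 else -(((m j : ℝ) - 4) / ((m j : ℝ) - 2))) :
    Filter.Tendsto φ (𝓝[≠] 0)
      (𝓝 (4 * l / 7 + (∑ j, ((k j : ℝ) - 1) / (k j : ℝ)) + M)) ∧
    0 < 4 * (l : ℝ) / 7 + (∑ j, ((k j : ℝ) - 1) / (k j : ℝ)) + M ∧
    Filter.Tendsto φ (𝓝[≠] (π / 2))
      (𝓝 (-(∑ j, ((k j : ℝ) - 1) / (k j : ℝ)) + ∑ j, c j)) ∧
    -(∑ j, ((k j : ℝ) - 1) / (k j : ℝ)) + (∑ j, c j) < 0 := by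
  have hSnn : 0 ≤ ∑ j, ((k j : ℝ) - 1) / (k j : ℝ) := by
    refine Finset.sum_nonneg fun j _ => ?_
    have h1 : (1:ℝ) ≤ (k j : ℝ) := by exact_mod_cast hk j
    exact div_nonneg (by linarith) (by linarith)
  have hcneg : ∀ j, c j < 0 := by
    intro j
    rw [hc j]
    split_ifs with h
    · norm_num
    · obtain ⟨r, hr⟩ := Nat.not_even_iff_odd.mp h
      have h5 : 5 ≤ m j := by have := hm j; omega
      have h5' : (5:ℝ) ≤ (m j : ℝ) := by exact_mod_cast h5
      have : 0 < ((m j:ℝ) - 4) / ((m j:ℝ) - 2) := div_pos (by linarith) (by linarith)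
      linarith
  have hCle : (∑ j, c j) ≤ 0 :=
    Finset.sum_nonpos fun j _ => le_of_lt (hcneg j)
  refine ⟨?_, ?_, ?_, ?_⟩
  · -- limit at 0
    have hA := tendsto_finset_sum (Finset.univ : Finset (Fin K))
      (fun j _ => A_zero (hk j))
    have hD := tendsto_finset_sum (Finset.univ : Finset (Fin M))
      (fun j _ => D_zero (m j))
    have h := (E_zero l).add hA |>.add hD
    have e1 : (∑ _j : Fin M, (1:ℝ)) = (M:ℝ) := by simp
    rw [e1] at h
    exact (tendsto_congr hφ).mpr h
  · -- positivity at 0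
    have hl' : (1:ℝ) ≤ (l:ℝ) := by exact_mod_cast hl
    have hM : (0:ℝ) ≤ (M:ℝ) := Nat.cast_nonneg M
    linarith
  · -- limit at π/2
    have hA := tendsto_finset_sum (Finset.univ : Finset (Fin K))
      (fun j _ => A_pi_div_two (hk j))
    have hD : Tendsto (fun x => ∑ j, Real.cos (((m j:ℝ)-4)*x) / Real.cos (((m j:ℝ)-2)*x))
        (𝓝[≠] (π/2)) (𝓝 (∑ j, c j)) := by
      refine tendsto_finset_sum _ fun j _ => ?_
      rw [hc j]
      exact D_pi_div_two (hm j)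
    have h := ((E_pi l).add hA).add hD
    have e1 : (∑ j, -(((k j:ℝ)-1)/(k j:ℝ))) = -(∑ j, ((k j:ℝ)-1)/(k j:ℝ)) := by
      rw [← Finset.sum_neg_distrib]
    rw [e1] at h
    have e2 : (0:ℝ) + -(∑ j, ((k j:ℝ)-1)/(k j:ℝ)) + (∑ j, c j)
        = -(∑ j, ((k j:ℝ)-1)/(k j:ℝ)) + (∑ j, c j) := by ring
    rw [e2] at h
    exact (tendsto_congr hφ).mpr h
  · -- negativity at π/2
    rcases hnontriv with ⟨j0, hj0⟩ | hM
    · have hSpos : 0 < ∑ j, ((k j : ℝ) - 1) / (k j : ℝ) := by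
        refine Finset.sum_pos' (fun j _ => ?_) ⟨j0, Finset.mem_univ j0, ?_⟩
        · have h1 : (1:ℝ) ≤ (k j : ℝ) := by exact_mod_cast hk j
          exact div_nonneg (by linarith) (by linarith)
        · have h2 : (2:ℝ) ≤ (k j0 : ℝ) := by exact_mod_cast hj0
          exact div_pos (by linarith) (by linarith)
      linarith
    · have hCneg : (∑ j, c j) < 0 := by
        refine Finset.sum_neg (fun j _ => hcneg j) ?_
        exact Finset.univ_nonempty_iff.mpr ⟨⟨0, hM⟩⟩
      linarith
end
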